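/- arXiv:2104.05410 — 9 statements merged into one kernel-verified Lean document; each statement's English description precedes it below -/
import Mathlib

section
/- For m×n complex matrices A and B, per(A B*) = ∑_{K ∈ ℕ^n, |K| = m} K! · coe(x^K, F_A) · conj(coe(x^K, F_B)), where B* is the conjugate transpose of B and coe(x^K, F) denotes the coefficient of the monomial x^K in F. Equivalently, per(A B*) = ⟨F_A, F_B⟩ for the inner product ⟨f,g⟩ = ∑_K K! coe(x^K,f) conj(coe(x^K,g)) on homogeneous polynomials of degree m. -/
open MvPolynomial ComplexConjugate Matrix

/-- `F_A(x) = ∏_{i=1}^m ∑_{j=1}^n a_{ij} x_j`. -/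
noncomputable def FA {m n : ℕ} (A : Matrix (Fin m) (Fin n) ℂ) : MvPolynomial (Fin n) ℂ :=
  ∏ i : Fin m, ∑ j : Fin n, MvPolynomial.C (A i j) * MvPolynomial.X j

/-!
Multiplying out `F_A` over all maps `f : Fin m → Fin n` shows that the coefficient of `x^K` in
`F_A` is the sum of `∏ i, a_{i, f i}` over the maps `f` with fibre sizes `K`. Multiplying out
the permanent gives `per (A Bᴴ) = ∑ f, ∑ σ, (∏ i, a_{i, f i}) * ∏ i, conj b_{i, f (σ i)}`. For
fixed `f`, the maps `f ∘ σ` are exactly the maps `g` with the same fibre sizes `K`, each reached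
by `K!` permutations, because the permutations `σ` with `f ∘ σ = g` are the families of
bijections between corresponding fibres of `g` and `f`.
-/

open Finset Equiv Nat

section FiberCount

variable {ι κ : Type*} [Fintype ι]

noncomputable def fiberCount (f : ι → κ) : κ →₀ ℕ := ∑ i, Finsupp.single (f i) 1

theorem fiberCount_apply [DecidableEq κ] (f : ι → κ) (j : κ) :
    fiberCount f j = Fintype.card {i // f i = j} := by
  rw [fiberCount, Finsupp.finsetSum_apply, Fintype.card_subtype, card_filter]
  exact sum_congr rfl fun i _ => Finsupp.single_apply

theorem sum_fiberCount [Fintype κ] (f : ι → κ) : ∑ j, fiberCount f j = Fintype.card ι := by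
  classical
  simp_rw [fiberCount_apply, ← Fintype.card_sigma, Fintype.card_congr (sigmaFiberEquiv f)]

def permCompEqEquiv (f g : ι → κ) :
    {σ : Perm ι // f ∘ σ = g} ≃ ((j : κ) → ({i // g i = j} ≃ {i // f i = j})) where
  toFun σ j := σ.1.subtypeEquiv fun i => by rw [← congrFun σ.2 i]; rfl
  invFun e := ⟨(sigmaFiberEquiv g).symm.trans ((sigmaCongrRight e).trans (sigmaFiberEquiv f)),
    funext fun i => (e (g i) ⟨i, rfl⟩).2⟩
  left_inv σ := by ext; rfl
  right_inv e := by
    funext j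
    ext ⟨i, rfl⟩
    rfl

theorem card_perm_comp_eq [DecidableEq ι] [Fintype κ] [DecidableEq κ] (f g : ι → κ) :
    Fintype.card {σ : Perm ι // f ∘ σ = g}
      = if fiberCount f = fiberCount g then ∏ j, (fiberCount f j)! else 0 := by
  have hfiber (j : κ) : Fintype.card ({i // g i = j} ≃ {i // f i = j})
      = if fiberCount f j = fiberCount g j then (fiberCount f j)! else 0 := by
    split_ifs with h
    · rw [h, fiberCount_apply]
      refine Fintype.card_equiv (Fintype.equivOfCardEq ?_)
      rw [← fiberCount_apply, ← fiberCount_apply, h]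
    · rw [Fintype.card_eq_zero_iff]
      exact ⟨fun e => h (by rw [fiberCount_apply, fiberCount_apply, Fintype.card_congr e])⟩
  rw [Fintype.card_congr (permCompEqEquiv f g), Fintype.card_pi, Fintype.prod_congr _ _ hfiber,
    prod_ite_zero]
  simp_rw [mem_univ, true_implies, ← Finsupp.ext_iff]

theorem sum_perm_comp {M : Type*} [AddCommMonoid M] [DecidableEq ι] [Fintype κ] [DecidableEq κ]
    (f : ι → κ) (b : (ι → κ) → M) :
    ∑ σ : Perm ι, b (f ∘ σ)
      = (∏ j, (fiberCount f j)!) • ∑ g with fiberCount g = fiberCount f, b g := by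
  rw [← sum_fiberwise' univ (fun σ : Perm ι => f ∘ σ) b]
  simp_rw [sum_const, ← Fintype.card_subtype, card_perm_comp_eq, smul_sum, sum_filter, ite_smul,
    zero_smul, eq_comm]

end FiberCount

theorem permanent_mul_transpose {R ι κ : Type*} [CommSemiring R] [Fintype ι] [DecidableEq ι]
    [Fintype κ] (A B : Matrix ι κ R) :
    (A * Bᵀ).permanent = ∑ f : ι → κ, ∑ σ : Perm ι, (∏ i, A i (f i)) * ∏ i, B i ((f ∘ σ) i) := by
  have hperm (σ : Perm ι) : ∏ i, (A * Bᵀ) i (σ i)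
      = ∑ f : ι → κ, (∏ i, A i (f i)) * ∏ i, B i (f (σ⁻¹ i)) := by
    simp_rw [mul_apply, transpose_apply, Fintype.prod_sum, prod_mul_distrib]
    refine sum_congr rfl fun f _ => ?_
    rw [← Equiv.prod_comp σ fun i => B i (f (σ⁻¹ i))]
    simp
  rw [← permanent_transpose, permanent]
  simp_rw [transpose_apply, hperm]
  rw [sum_comm]
  exact sum_congr rfl fun f _ => Fintype.sum_equiv (Equiv.inv _) _ _ fun σ => rfl

variable {m n : ℕ}

theorem FA_eq_sum_monomial (A : Matrix (Fin m) (Fin n) ℂ) :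
    FA A = ∑ f : Fin m → Fin n, monomial (fiberCount f) (∏ i, A i (f i)) := by
  simp_rw [FA, C_mul_X_eq_monomial, Fintype.prod_sum, fiberCount, monomial_sum_prod]

theorem coeff_FA (A : Matrix (Fin m) (Fin n) ℂ) (K : Fin n →₀ ℕ) :
    coeff K (FA A) = ∑ f with fiberCount f = K, ∏ i, A i (f i) := by
  rw [FA_eq_sum_monomial, coeff_sum, sum_filter]
  simp_rw [coeff_monomial]

/-- `per(A B*) = ∑_{K ∈ ℕ^n, |K| = m} K! · coe(x^K, F_A) · conj(coe(x^K, F_B))`. -/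
theorem stmt1 (m n : ℕ) (A B : Matrix (Fin m) (Fin n) ℂ) :
    Matrix.permanent (A * Bᴴ)
      = ∑ᶠ K : Fin n →₀ ℕ,
          if (∑ j, K j) = m then
            (∏ j, Nat.factorial (K j) : ℕ) * coeff K (FA A) * conj (coeff K (FA B))
          else 0 := by
  set ψ : (Fin m → Fin n) → ℂ := fun f =>
    (∏ j, (fiberCount f j)! : ℕ) * (∏ i, A i (f i)) * conj (coeff (fiberCount f) (FA B))
  have hsummand (K : Fin n →₀ ℕ) :
      (if ∑ j, K j = m then (∏ j, (K j)! : ℕ) * coeff K (FA A) * conj (coeff K (FA B)) else 0)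
        = ∑ f with fiberCount f = K, ψ f := by
    split_ifs with hK
    · rw [coeff_FA, mul_sum, sum_mul]
      exact sum_congr rfl fun f hf => by rw [← (mem_filter.1 hf).2]
    · refine (sum_eq_zero fun f hf => absurd ?_ hK).symm
      rw [← (mem_filter.1 hf).2, sum_fiberCount, Fintype.card_fin]
  rw [finsum_congr hsummand, finsum_sum_filter, conjTranspose, transpose_map,
    permanent_mul_transpose]
  refine sum_congr rfl fun f _ => ?_
  rw [← mul_sum, sum_perm_comp f fun g => ∏ i, B.map star i (g i)]
  simp only [ψ, coeff_FA, map_sum, map_prod, map_apply, starRingEnd_apply, nsmul_eq_mul]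
  ring
end

section
/- Let G = (V,E) be a graph, K ∈ ℕ^E with |K| := ∑_e K(e) = |E|, and let C_G(K) be the |E|×|E| matrix whose columns consist of K(e) copies of the e-th column of C_G. Then coe(x^K, P_G) = (1/K!)·per(C_G(K)), where P_G = ∏_{e={i,j}∈E, i<j} (∑_{e'∋i} x_{e'} − ∑_{e'∋j} x_{e'}) is a homogeneous polynomial of degree |E| in the edge variables {x_e : e ∈ E}. -/
/-! Each factor of `P_G` is the linear form `∑_{e'} C_{ee'} x_{e'}` given by a row of `C_G`, so
the coefficient of `x^K` is the sum of `∏_e C_{e,g(e)}` over the maps `g : E → E` whose fibers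
have sizes `K`. The permanent of `C_G(K)` is the sum of `∏_e C_{e,c(σ e)}` over permutations `σ`,
and `σ ↦ c ∘ σ` hits each such `g` exactly `K!` times: its fibers are cosets of the group of
permutations preserving the fibers of `c`. -/

open MvPolynomial Matrix

open Finset Nat

theorem Equiv.Perm.card_filter_comp_eq {α ι : Type*} [Fintype α] [DecidableEq α] [Fintype ι]
    [DecidableEq ι] {f g : α → ι} (hfg : ∀ i, #{a | g a = i} = #{a | f a = i}) :
    #{σ : Equiv.Perm α | f ∘ σ = g} = ∏ i, (#{a | f a = i})! := by
  simp only [← Fintype.card_subtype] at hfg ⊢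
  let τ : α ≃ α := Equiv.ofFiberEquiv fun i => Fintype.equivOfCardEq (hfg i)
  have hτ : f ∘ τ = g := funext (Equiv.ofFiberEquiv_map _)
  rw [← DomMulAct.stabilizer_card f]
  refine Fintype.card_congr (Equiv.subtypeEquiv (Equiv.mulRight τ⁻¹) fun σ => ?_)
  rw [← hτ]
  exact (Equiv.comp_symm_eq τ _ _).symm

theorem MvPolynomial.coeff_prod_sum_smul_X {ι σ R : Type*} [CommSemiring R] [Fintype ι]
    [DecidableEq ι] [Fintype σ] [DecidableEq σ] (A : Matrix ι σ R) (d : σ →₀ ℕ) :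
    coeff d (∏ i, ∑ j, A i j • X j) =
      ∑ g : ι → σ with ∀ j, #{i | g i = j} = d j, ∏ i, A i (g i) := by
  have hterm (g : ι → σ) : ∏ i, A i (g i) • (X (g i) : MvPolynomial σ R) =
      monomial (∑ i, Finsupp.single (g i) 1) (∏ i, A i (g i)) := by
    rw [prod_smul]
    simp only [X, ← monomial_sum_one, smul_monomial, smul_eq_mul, mul_one]
  have hexp (g : ι → σ) (j : σ) : (∑ i, Finsupp.single (g i) 1) j = #{i | g i = j} := by
    simp [Finsupp.finsetSum_apply, Finsupp.single_apply, sum_boole]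
  rw [Fintype.prod_sum, coeff_sum, sum_filter]
  refine sum_congr rfl fun g _ => ?_
  rw [hterm, coeff_monomial]
  refine if_congr ?_ rfl rfl
  rw [Finsupp.ext_iff]
  simp only [hexp]

theorem Matrix.permanent_submatrix_id_eq {ι κ R : Type*} [CommSemiring R] [Fintype ι]
    [DecidableEq ι] [Fintype κ] [DecidableEq κ] (A : Matrix ι κ R) (c : ι → κ) :
    (A.submatrix id c).permanent = (∏ k, (#{i | c i = k})!) •
      ∑ g : ι → κ with ∀ k, #{i | g i = k} = #{i | c i = k}, ∏ i, A i (g i) := by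
  have hfib (σ : Equiv.Perm ι) (k : κ) : #{i | c (σ i) = k} = #{i | c i = k} := by
    simp only [← Fintype.card_subtype]
    exact Fintype.card_congr (σ.subtypeEquiv fun _ => Iff.rfl)
  calc (A.submatrix id c).permanent = ∑ σ : Equiv.Perm ι, ∏ i, A i ((c ∘ σ) i) := by
        rw [← permanent_transpose]; rfl
    _ = ∑ g : ι → κ with ∀ k, #{i | g i = k} = #{i | c i = k},
          ∑ σ ∈ univ.filter (fun σ : Equiv.Perm ι => c ∘ σ = g), ∏ i, A i (g i) := by
        rw [sum_fiberwise_of_maps_to' fun σ _ => by simpa using hfib σ]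
    _ = _ := by
      rw [smul_sum]
      refine sum_congr rfl fun g hg => ?_
      rw [sum_const, Equiv.Perm.card_filter_comp_eq (mem_filter.1 hg).2]

theorem stmt11_general (n : ℕ) (E : Type) [Fintype E] [DecidableEq E]
    (ends : E → Fin n × Fin n)
    (C : Matrix E E ℂ)
    (hC : ∀ e e', C e e' =
        (if (ends e).1 = (ends e').1 ∨ (ends e).1 = (ends e').2 then 1 else 0)
          - (if (ends e).2 = (ends e').1 ∨ (ends e).2 = (ends e').2 then 1 else 0))
    (K : E → ℕ)
    (c : E → E)
    (hc : ∀ e, (Finset.univ.filter fun f => c f = e).card = K e) :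
    MvPolynomial.coeff (Finsupp.equivFunOnFinite.symm K)
        (∏ e : E,
          ((∑ e' ∈ Finset.univ.filter
              (fun e' : E => (ends e').1 = (ends e).1 ∨ (ends e').2 = (ends e).1),
              MvPolynomial.X e')
            - (∑ e' ∈ Finset.univ.filter
              (fun e' : E => (ends e').1 = (ends e).2 ∨ (ends e').2 = (ends e).2),
              (MvPolynomial.X e' : MvPolynomial E ℂ))))
      = ((∏ e, Nat.factorial (K e) : ℕ) : ℂ)⁻¹ *
          Matrix.permanent (Matrix.of fun e f => C e (c f)) := by
  have hrow (e : E) :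
      (∑ e' ∈ univ.filter fun e' => (ends e').1 = (ends e).1 ∨ (ends e').2 = (ends e).1, X e')
        - ∑ e' ∈ univ.filter fun e' => (ends e').1 = (ends e).2 ∨ (ends e').2 = (ends e).2, X e'
      = ∑ e', C e e' • (X e' : MvPolynomial E ℂ) := by
    simp only [sum_filter, ← sum_sub_distrib, hC, sub_smul, ite_smul, one_smul, zero_smul, eq_comm]
  have hK! : ((∏ e, (K e)! : ℕ) : ℂ) ≠ 0 :=
    Nat.cast_ne_zero.2 (prod_ne_zero_iff.2 fun e _ => factorial_ne_zero _)
  rw [prod_congr rfl fun e _ => hrow e, coeff_prod_sum_smul_X,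
    show of (fun e f => C e (c f)) = C.submatrix id c from rfl, permanent_submatrix_id_eq]
  simp only [hc, Finsupp.coe_equivFunOnFinite_symm, nsmul_eq_mul, inv_mul_cancel_left₀ hK!]
  rfl

/-- `coe(x^K, P_G) = (1/K!)·per(C_G(K))` for `K ∈ ℕ^E` with `∑_e K(e) = |E|`.
Edges are given by their ordered endpoint pairs; `C_G(K)` is encoded by a column-selection
function `c : E → E` whose fibers have sizes `K(e)`. -/
theorem stmt11 (n : ℕ) (E : Type) [Fintype E] [DecidableEq E]
    (ends : E → Fin n × Fin n)
    (horder : ∀ e, (ends e).1 < (ends e).2)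
    (hinj : Function.Injective ends)
    (C : Matrix E E ℂ)
    (hC : ∀ e e', C e e' =
        (if (ends e).1 = (ends e').1 ∨ (ends e).1 = (ends e').2 then 1 else 0)
          - (if (ends e).2 = (ends e').1 ∨ (ends e).2 = (ends e').2 then 1 else 0))
    (K : E → ℕ) (hK : ∑ e, K e = Fintype.card E)
    (c : E → E)
    (hc : ∀ e, (Finset.univ.filter fun f => c f = e).card = K e) :
    MvPolynomial.coeff (Finsupp.equivFunOnFinite.symm K)
        (∏ e : E,
          ((∑ e' ∈ Finset.univ.filter
              (fun e' : E => (ends e').1 = (ends e).1 ∨ (ends e').2 = (ends e).1),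
              MvPolynomial.X e')
            - (∑ e' ∈ Finset.univ.filter
              (fun e' : E => (ends e').1 = (ends e).2 ∨ (ends e').2 = (ends e).2),
              (MvPolynomial.X e' : MvPolynomial E ℂ))))
      = ((∏ e, Nat.factorial (K e) : ℕ) : ℂ)⁻¹ *
          Matrix.permanent (Matrix.of fun e f => C e (c f)) :=
  stmt11_general n E ends C hC K c hc
end

section
/- Let E ⊆ E' be finite edge sets on vertex set {1,...,n}, and let K ∈ ℕ^{E'}. If there exists a polynomial F in the span of {H_E^{K'} : K' ≤ K restricted to E, |K'| = |E'|} with ⟨F, Q_{E'}⟩ ≠ 0, then there exists F' in the span of {H_E^{K''} : K'' ≤ K restricted to E, |K''| = |E|} with ⟨F', Q_E⟩ ≠ 0. Here Q_E = ∏_{{i,j}∈E, i<j} (x_i − x_j), H_E^{K} = ∏_{{i,j}∈E, i<j} (x_i + x_j)^{K({i,j})}, and ⟨·,·⟩ is the inner product ⟨f,g⟩ = ∑_K K! coe(x^K,f) conj(coe(x^K,g)) on homogeneous polynomials. -/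
open MvPolynomial ComplexConjugate

/-- `Q_E = ∏_{{i,j}∈E, i<j} (x_i − x_j)`, edges given as ordered pairs `(i,j)` with `i < j`. -/
noncomputable def Qpoly (n : ℕ) (S : Finset (Fin n × Fin n)) : MvPolynomial (Fin n) ℂ :=
  ∏ p ∈ S, (MvPolynomial.X p.1 - MvPolynomial.X p.2)

/-- `H_E^K = ∏_{{i,j}∈E, i<j} (x_i + x_j)^{K({i,j})}`. -/
noncomputable def Hpoly (n : ℕ) (S : Finset (Fin n × Fin n)) (K : Fin n × Fin n → ℕ) :
    MvPolynomial (Fin n) ℂ :=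
  ∏ p ∈ S, (MvPolynomial.X p.1 + MvPolynomial.X p.2) ^ K p

/-- `W_{E,m}^K`: the span of the `H_E^{K'}` for `K' ≤ K` supported on `E` with `|K'| = m`. -/
noncomputable def Wspan (n : ℕ) (E : Finset (Fin n × Fin n)) (K : Fin n × Fin n → ℕ) (m : ℕ) :
    Submodule ℂ (MvPolynomial (Fin n) ℂ) :=
  Submodule.span ℂ
    {H | ∃ K' : Fin n × Fin n → ℕ, (∀ p, K' p ≤ K p) ∧ (∀ p ∉ E, K' p = 0) ∧
      (∑ p ∈ E, K' p = m) ∧ H = Hpoly n E K'}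

/-- `⟨f,g⟩ = ∑_K K! coe(x^K,f) conj(coe(x^K,g))`. -/
noncomputable def innerW (n : ℕ) (f g : MvPolynomial (Fin n) ℂ) : ℂ :=
  ∑ᶠ K : Fin n →₀ ℕ,
    (∏ j, Nat.factorial (K j) : ℕ) * coeff K f * conj (coeff K g)

/-!
The factorial weights make multiplication by `xᵢ` adjoint to `∂/∂xᵢ` for `innerW`, so
`⟨F, Q_E · ∏_{(i,j) ∈ E' \ E} (xᵢ - xⱼ)⟩ = ⟨D F, Q_E⟩` with `D = ∏_{(i,j) ∈ E' \ E} (∂ᵢ - ∂ⱼ)`.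
Each `∂ᵢ` lowers one exponent of `H_E^{K'}` by one, hence maps `W_{E,m+1}^K` into `W_{E,m}^K`;
thus `F' = D F` lies in `W_{E,|E|}^K` and pairs with `Q_E` as `F` pairs with `Q_{E'}`.
-/

lemma Finsupp.prod_factorial_add_single {σ : Type*} [Fintype σ] (L : σ →₀ ℕ) (i : σ) :
    ∏ j, ((L + Finsupp.single i 1 : σ →₀ ℕ) j).factorial = (L i + 1) * ∏ j, (L j).factorial := by
  classical
  rw [Fintype.prod_eq_mul_prod_compl i, Fintype.prod_eq_mul_prod_compl i, ← mul_assoc]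
  congr 1
  · simp [Nat.factorial_succ]
  · refine Finset.prod_congr rfl fun j hj => ?_
    simp_all [eq_comm]

namespace innerW

variable {n : ℕ}

lemma support_summand_finite (f g : MvPolynomial (Fin n) ℂ) :
    (Function.support fun K : Fin n →₀ ℕ =>
      ((∏ j, (K j).factorial : ℕ) : ℂ) * coeff K f * conj (coeff K g)).Finite :=
  f.support.finite_toSet.subset fun K hK => by
    contrapose! hK
    simp_all

lemma sub_left (f g h : MvPolynomial (Fin n) ℂ) :
    innerW n (f - g) h = innerW n f h - innerW n g h := by
  rw [innerW, innerW, innerW, ← finsum_sub_distrib (support_summand_finite f h)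
    (support_summand_finite g h)]
  simp only [coeff_sub, mul_sub, sub_mul]

lemma sub_right (f g h : MvPolynomial (Fin n) ℂ) :
    innerW n f (g - h) = innerW n f g - innerW n f h := by
  rw [innerW, innerW, innerW, ← finsum_sub_distrib (support_summand_finite f g)
    (support_summand_finite f h)]
  simp only [coeff_sub, map_sub, mul_sub]

lemma mul_X (f g : MvPolynomial (Fin n) ℂ) (i : Fin n) :
    innerW n f (g * X i) = innerW n (pderiv i f) g := by
  classical
  set φ : (Fin n →₀ ℕ) → ℂ := fun K =>
    ((∏ j, (K j).factorial : ℕ) : ℂ) * coeff K f * conj (coeff K (g * X i))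
  have hinj : Function.Injective (· + Finsupp.single i 1 : (Fin n →₀ ℕ) → _) :=
    add_left_injective _
  have hsupp : Function.support φ ⊆ Set.range (· + Finsupp.single i 1) := by
    intro K hK
    have hi : K i ≠ 0 := by
      contrapose! hK
      simp [φ, coeff_mul_X', hK]
    refine ⟨K - Finsupp.single i 1, tsub_add_cancel_of_le ?_⟩
    rwa [Finsupp.single_le_iff, Nat.one_le_iff_ne_zero]
  calc innerW n f (g * X i) = ∑ᶠ K ∈ Set.range (· + Finsupp.single i 1), φ K := by
        rw [innerW, ← finsum_mem_univ]
        exact finsum_mem_inter_support_eq' φ _ _ fun K hK => by simpa using hsupp hK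
    _ = ∑ᶠ L, φ (L + Finsupp.single i 1) := finsum_mem_range hinj
    _ = innerW n (pderiv i f) g := by
        refine finsum_congr fun L => ?_
        simp only [φ, coeff_mul_X, coeff_pderiv, Finsupp.prod_factorial_add_single]
        push_cast
        ring

lemma mul_X_sub_X (f g : MvPolynomial (Fin n) ℂ) (i j : Fin n) :
    innerW n f (g * (X i - X j)) = innerW n (pderiv i f - pderiv j f) g := by
  rw [mul_sub, sub_right, mul_X, mul_X, sub_left]

end innerW

lemma Derivation.leibniz_prod {R A M : Type*} [CommSemiring R] [CommSemiring A] [Algebra R A]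
    [AddCommMonoid M] [Module A M] [Module R M] [IsScalarTower R A M] (D : Derivation R A M)
    {ι : Type*} [DecidableEq ι] (s : Finset ι) (f : ι → A) :
    D (∏ i ∈ s, f i) = ∑ i ∈ s, (∏ j ∈ s.erase i, f j) • D (f i) := by
  induction s using Finset.induction_on with
  | empty => simp
  | @insert a s ha ih =>
    rw [Finset.prod_insert ha, Derivation.leibniz, ih, Finset.sum_insert ha, Finset.erase_insert ha,
      Finset.smul_sum, add_comm]
    congr 1
    refine Finset.sum_congr rfl fun b hb => ?_
    rw [Finset.erase_insert_of_ne (ne_of_mem_of_not_mem hb ha).symm,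
      Finset.prod_insert fun h => ha (Finset.mem_of_mem_erase h), mul_smul]

lemma MvPolynomial.pderiv_X_add_X_pow_succ {σ R : Type*} [CommSemiring R] [DecidableEq σ]
    (i a b : σ) (t : ℕ) :
    pderiv i ((X a + X b : MvPolynomial σ R) ^ (t + 1)) =
      C (((t + 1 : ℕ) : R) * ((if a = i then 1 else 0) + (if b = i then 1 else 0))) *
        (X a + X b) ^ t := by
  have hX : ∀ j, pderiv i (X j : MvPolynomial σ R) = C (if j = i then 1 else 0) := fun j => by
    by_cases h : j = i <;> simp [h]
  rw [pderiv_pow, map_add, hX, hX, ← map_add, map_mul, map_natCast, add_tsub_cancel_right]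
  ring

lemma Hpoly_update {n : ℕ} {S : Finset (Fin n × Fin n)} {q : Fin n × Fin n} (hq : q ∈ S)
    (K' : Fin n × Fin n → ℕ) (k : ℕ) :
    Hpoly n S (Function.update K' q k) =
      (∏ p ∈ S.erase q, (X p.1 + X p.2) ^ K' p) * (X q.1 + X q.2) ^ k := by
  rw [Hpoly, ← Finset.prod_erase_mul S _ hq, Function.update_self]
  congr 1
  exact Finset.prod_congr rfl fun p hp => by rw [Function.update_of_ne (Finset.ne_of_mem_erase hp)]

section Wspan

variable {n m : ℕ} {E : Finset (Fin n × Fin n)} {K K' : Fin n × Fin n → ℕ}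

lemma Hpoly_update_mem_Wspan (hle : ∀ p, K' p ≤ K p) (h0 : ∀ p ∉ E, K' p = 0)
    (hsum : ∑ p ∈ E, K' p = m + 1) {q : Fin n × Fin n} (hq : q ∈ E) {t : ℕ}
    (ht : K' q = t + 1) :
    Hpoly n E (Function.update K' q t) ∈ Wspan n E K m := by
  refine Submodule.subset_span ⟨Function.update K' q t, fun p => ?_, fun p hp => ?_, ?_, rfl⟩
  · rcases eq_or_ne p q with rfl | hpq
    · rw [Function.update_self]
      have := hle p
      omega
    · rw [Function.update_of_ne hpq]
      exact hle p
  · rw [Function.update_of_ne (ne_of_mem_of_not_mem hq hp).symm]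
    exact h0 p hp
  · rw [Finset.sum_update_of_mem hq, Finset.sdiff_singleton_eq_erase]
    rw [← Finset.add_sum_erase _ _ hq] at hsum
    omega

lemma pderiv_Hpoly_mem_Wspan (hle : ∀ p, K' p ≤ K p) (h0 : ∀ p ∉ E, K' p = 0)
    (hsum : ∑ p ∈ E, K' p = m + 1) (i : Fin n) :
    pderiv i (Hpoly n E K') ∈ Wspan n E K m := by
  classical
  rw [Hpoly, Derivation.leibniz_prod]
  refine Submodule.sum_mem _ fun q hq => ?_
  cases hKq : K' q with
  | zero => simp
  | succ t =>
    rw [pderiv_X_add_X_pow_succ, smul_eq_mul, mul_left_comm, C_mul', ← Hpoly_update hq]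
    exact Submodule.smul_mem _ _ (Hpoly_update_mem_Wspan hle h0 hsum hq hKq)

lemma pderiv_mem_Wspan {F : MvPolynomial (Fin n) ℂ} (hF : F ∈ Wspan n E K (m + 1)) (i : Fin n) :
    pderiv i F ∈ Wspan n E K m := by
  refine (Submodule.span_le (p := (Wspan n E K m).comap (pderiv i).toLinearMap)).mpr ?_ hF
  rintro _ ⟨K', hle, h0, hsum, rfl⟩
  exact pderiv_Hpoly_mem_Wspan hle h0 hsum i

end Wspan

lemma Qpoly_insert {n : ℕ} {S : Finset (Fin n × Fin n)} {a : Fin n × Fin n} (ha : a ∉ S) :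
    Qpoly n (insert a S) = Qpoly n S * (X a.1 - X a.2) := by
  rw [Qpoly, Qpoly, Finset.prod_insert ha, mul_comm]

lemma Qpoly_union {n : ℕ} {S T : Finset (Fin n × Fin n)} (h : Disjoint S T) :
    Qpoly n (S ∪ T) = Qpoly n S * Qpoly n T :=
  Finset.prod_union h

lemma exists_innerW_eq_innerW_mul_Qpoly {n m : ℕ} {E : Finset (Fin n × Fin n)}
    {K : Fin n × Fin n → ℕ} (g : MvPolynomial (Fin n) ℂ) (S : Finset (Fin n × Fin n)) :
    ∀ F ∈ Wspan n E K (m + S.card),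
      ∃ F' ∈ Wspan n E K m, innerW n F' g = innerW n F (g * Qpoly n S) := by
  classical
  induction S using Finset.induction_on with
  | empty => exact fun F hF => ⟨F, hF, by simp [Qpoly]⟩
  | @insert a S ha ih =>
    intro F hF
    rw [Finset.card_insert_of_notMem ha, ← add_assoc] at hF
    obtain ⟨F', hF', hF'_eq⟩ :=
      ih _ (Submodule.sub_mem _ (pderiv_mem_Wspan hF a.1) (pderiv_mem_Wspan hF a.2))
    refine ⟨F', hF', ?_⟩
    rw [hF'_eq, ← innerW.mul_X_sub_X, Qpoly_insert ha, mul_assoc]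

theorem stmt12_general (n : ℕ) (E E' : Finset (Fin n × Fin n)) (hEE' : E ⊆ E')
    (K : Fin n × Fin n → ℕ)
    (F : MvPolynomial (Fin n) ℂ) (hF : F ∈ Wspan n E K E'.card)
    (h : innerW n F (Qpoly n E') ≠ 0) :
    ∃ F' ∈ Wspan n E K E.card, innerW n F' (Qpoly n E) ≠ 0 := by
  rw [← Finset.card_sdiff_add_card_eq_card hEE', add_comm] at hF
  obtain ⟨F', hF', hF'_eq⟩ := exists_innerW_eq_innerW_mul_Qpoly (Qpoly n E) (E' \ E) F hF
  refine ⟨F', hF', ?_⟩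
  rwa [hF'_eq, ← Qpoly_union Finset.disjoint_sdiff, Finset.union_sdiff_of_subset hEE']

/-- Lemma 6.1: if some `F ∈ W_{E,|E'|}^K` pairs nontrivially with `Q_{E'}`, then some
`F' ∈ W_{E,|E|}^K` pairs nontrivially with `Q_E`. -/
theorem stmt12 (n : ℕ) (E E' : Finset (Fin n × Fin n)) (hEE' : E ⊆ E')
    (horder : ∀ p ∈ E', p.1 < p.2)
    (K : Fin n × Fin n → ℕ)
    (F : MvPolynomial (Fin n) ℂ) (hF : F ∈ Wspan n E K E'.card)
    (h : innerW n F (Qpoly n E') ≠ 0) :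
    ∃ F' ∈ Wspan n E K E.card, innerW n F' (Qpoly n E) ≠ 0 :=
  stmt12_general n E E' hEE' K F hF h
end

section
/- Let J ⊆ {1,...,n}, and for each unordered pair j < j' in J let t⁺_{jj'}, t⁻_{jj'} ∈ ℕ. Set φ(x) = ∏_{j<j'}(x_j − x_{j'})^{2t⁺_{jj'}}(x_j + x_{j'})^{2t⁻_{jj'}} and ψ(x) = ∏_{j<j'}(x_j x_{j'})^{t⁺_{jj'}+t⁻_{jj'}}. Then for every nonzero polynomial R ∈ ℂ[x_1,...,x_n] there exists a monomial x^K appearing with nonzero coefficient in R such that ⟨φ·x^K, ψ·R⟩ ≠ 0, where ⟨f,g⟩ = ∑_K K! coe(x^K,f) conj(coe(x^K,g)). -/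
/-!
If every pairing vanished, then, writing `ψ = x^S` and absorbing the factorial weights into
`R` (`V_L = (S + L)! · R_L`), linearity in the first argument would give `⟨φ V, ψ V⟩₀ = 0` for the
plain coefficient pairing `⟨f, g⟩₀ = ∑ f_B conj g_B`. On the grid of `N`-th roots of unity, with `N`
larger than all degrees, this pairing is `N^{-n} ∑ f(ω) conj g(ω)` (discrete Parseval). On the unit
torus `(a - b)² conj(ab) = -|a - b|²` and `(a + b)² conj(ab) = |a + b|²`, so
`φ conj ψ = (-1)^{∑ t⁺} |w|²` with `w = ∏ (x_j - x_j')^{t⁺} (x_j + x_j')^{t⁻}`. Hence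
`⟨φ V, ψ V⟩₀ = ± N^{-n} ∑ |w V|²` over the grid, which is nonzero because the nonzero polynomial
`w V` cannot vanish on the whole grid (combinatorial Nullstellensatz).
-/

open MvPolynomial ComplexConjugate

open Finset

noncomputable def coeffInner {σ : Type*} (f g : MvPolynomial σ ℂ) : ℂ :=
  ∑ B ∈ g.support, coeff B f * conj (coeff B g)

lemma IsPrimitiveRoot.sum_pow_mul_conj_pow {N : ℕ} {ζ : ℂ} (hζ : IsPrimitiveRoot ζ N)
    {a b : ℕ} (ha : a < N) (hb : b < N) :
    ∑ c : Fin N, (ζ ^ a * conj ζ ^ b) ^ (c : ℕ) = if a = b then (N : ℂ) else 0 := by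
  have hN : N ≠ 0 := by omega
  have hζ0 : ζ ≠ 0 := hζ.ne_zero hN
  rw [← Complex.inv_eq_conj (Complex.norm_eq_one_of_pow_eq_one hζ.pow_eq_one hN),
    Fin.sum_univ_eq_sum_range (fun c => (ζ ^ a * ζ⁻¹ ^ b) ^ c)]
  split_ifs with hab
  · subst hab
    simp [hζ0]
  · have hη : ζ ^ a * ζ⁻¹ ^ b ≠ 1 := by
      rw [inv_pow, Ne, mul_inv_eq_one₀ (pow_ne_zero _ hζ0)]
      exact fun h => hab (hζ.pow_inj ha hb h)
    have hηN : (ζ ^ a * ζ⁻¹ ^ b) ^ N = 1 := by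
      rw [mul_pow, ← pow_mul, ← pow_mul, mul_comm a, mul_comm b, pow_mul, pow_mul, inv_pow,
        hζ.pow_eq_one]
      simp
    rw [geom_sum_eq hη, hηN, sub_self, zero_div]

variable {σ : Type*}

lemma sum_eval_grid_mul_conj [Fintype σ] [DecidableEq σ] {N : ℕ} {ζ : ℂ}
    (hζ : IsPrimitiveRoot ζ N) {f g : MvPolynomial σ ℂ}
    (hf : ∀ j, f.degreeOf j < N) (hg : ∀ j, g.degreeOf j < N) :
    ∑ k : σ → Fin N, eval (fun j => ζ ^ (k j : ℕ)) f * conj (eval (fun j => ζ ^ (k j : ℕ)) g)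
      = (N : ℂ) ^ Fintype.card σ * coeffInner f g := by
  have orth : ∀ B ∈ f.support, ∀ C ∈ g.support,
      ∑ k : σ → Fin N, ∏ j, (ζ ^ B j * conj ζ ^ C j) ^ (k j : ℕ)
        = if B = C then (N : ℂ) ^ Fintype.card σ else 0 := by
    intro B hB C hC
    rw [← Fintype.prod_sum (fun j (c : Fin N) => (ζ ^ B j * conj ζ ^ C j) ^ (c : ℕ))]
    simp_rw [hζ.sum_pow_mul_conj_pow ((monomial_le_degreeOf _ hB).trans_lt (hf _))
      ((monomial_le_degreeOf _ hC).trans_lt (hg _)), Fintype.prod_ite_zero, Finsupp.ext_iff,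
      prod_const, card_univ]
  calc ∑ k : σ → Fin N,
        eval (fun j => ζ ^ (k j : ℕ)) f * conj (eval (fun j => ζ ^ (k j : ℕ)) g)
      = ∑ B ∈ f.support, ∑ C ∈ g.support, coeff B f * conj (coeff C g) *
          ∑ k : σ → Fin N, ∏ j, (ζ ^ B j * conj ζ ^ C j) ^ (k j : ℕ) := by
        simp_rw [eval_eq', map_sum, sum_mul_sum, mul_sum]
        rw [sum_comm]
        refine sum_congr rfl fun B _ => ?_
        rw [sum_comm]
        refine sum_congr rfl fun C _ => sum_congr rfl fun k _ => ?_
        simp only [map_mul, map_prod, map_pow]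
        rw [mul_mul_mul_comm, ← prod_mul_distrib]
        simp_rw [← pow_mul, mul_pow, ← pow_mul, mul_comm (k _ : ℕ)]
    _ = ∑ C ∈ g.support, coeff C f * conj (coeff C g) * (N : ℂ) ^ Fintype.card σ := by
        rw [sum_comm]
        refine sum_congr rfl fun C hC => ?_
        rw [sum_congr rfl fun B hB => by rw [orth B hB C hC, mul_ite, mul_zero], sum_ite_eq']
        split_ifs with hCf
        · rfl
        · rw [notMem_support_iff.mp hCf, zero_mul, zero_mul]
    _ = (N : ℂ) ^ Fintype.card σ * coeffInner f g := by
        rw [coeffInner, mul_sum]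
        exact sum_congr rfl fun C _ => mul_comm _ _

lemma exists_eval_grid_ne_zero {R : Type*} [CommRing R] [IsDomain R] [Finite σ] {N : ℕ} {ζ : R}
    (hζ : IsPrimitiveRoot ζ N) {w : MvPolynomial σ R} (hw : w ≠ 0)
    (hdeg : ∀ j, w.degreeOf j < N) :
    ∃ k : σ → Fin N, eval (fun j => ζ ^ (k j : ℕ)) w ≠ 0 := by
  classical
  by_contra! h
  have hinj : Function.Injective fun c : Fin N => ζ ^ (c : ℕ) :=
    fun c c' hc => Fin.ext (hζ.pow_inj c.isLt c'.isLt hc)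
  refine hw (eq_zero_of_eval_zero_at_prod_finset w
    (fun _ => univ.image fun c : Fin N => ζ ^ (c : ℕ))
    (by simpa [card_image_of_injective _ hinj] using hdeg) fun x hx => ?_)
  simp only [mem_image, mem_univ, true_and] at hx
  choose k hk using hx
  simpa [← funext hk] using h k

theorem coeffInner_ne_zero_of_eval_mul_conj_eq [Fintype σ] [DecidableEq σ]
    {f g w : MvPolynomial σ ℂ} {c : ℂ} (hc : c ≠ 0) (hw : w ≠ 0)
    (h : ∀ ω : σ → ℂ, (∀ j, ‖ω j‖ = 1) →
      eval ω f * conj (eval ω g) = c * Complex.normSq (eval ω w)) :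
    coeffInner f g ≠ 0 := by
  set N := f.totalDegree + g.totalDegree + w.totalDegree + 1
  have hN : N ≠ 0 := by omega
  have hζ := Complex.isPrimitiveRoot_exp N hN
  set ζ := Complex.exp (2 * Real.pi * Complex.I / N)
  have hdeg : ∀ p : MvPolynomial σ ℂ, p.totalDegree < N → ∀ j, p.degreeOf j < N :=
    fun p hp j => (degreeOf_le_totalDegree p j).trans_lt hp
  have hgrid : ∀ k : σ → Fin N, ∀ j, ‖ζ ^ (k j : ℕ)‖ = 1 := fun k j => by
    rw [norm_pow, Complex.norm_eq_one_of_pow_eq_one hζ.pow_eq_one hN, one_pow]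
  obtain ⟨k₀, hk₀⟩ := exists_eval_grid_ne_zero hζ hw (hdeg w (by omega))
  have hpos : 0 < ∑ k : σ → Fin N, Complex.normSq (eval (fun j => ζ ^ (k j : ℕ)) w) :=
    sum_pos' (fun k _ => Complex.normSq_nonneg _)
      ⟨k₀, mem_univ _, Complex.normSq_pos.mpr hk₀⟩
  have hsum := sum_eval_grid_mul_conj hζ (hdeg f (by omega)) (hdeg g (by omega))
  simp_rw [h _ (hgrid _), ← mul_sum, ← Complex.ofReal_sum] at hsum
  intro h0
  rw [h0, mul_zero, mul_eq_zero, Complex.ofReal_eq_zero] at hsum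
  exact hsum.elim hc hpos.ne'

lemma sub_pow_two_mul_add_pow_two_mul_conj {a b : ℂ} (ha : ‖a‖ = 1) (hb : ‖b‖ = 1) (s t : ℕ) :
    (a - b) ^ (2 * s) * (a + b) ^ (2 * t) * conj ((a * b) ^ (s + t)) =
      (-1) ^ s * Complex.normSq ((a - b) ^ s * (a + b) ^ t) := by
  have ha' : a * conj a = 1 := by rw [Complex.mul_conj', ha]; simp
  have hb' : b * conj b = 1 := by rw [Complex.mul_conj', hb]; simp
  have hsub : (a - b) ^ 2 * conj (a * b) = -Complex.normSq (a - b) := by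
    rw [← Complex.mul_conj, map_mul, map_sub]
    linear_combination ((a - b) * conj b) * ha' - ((a - b) * conj a) * hb'
  have hadd : (a + b) ^ 2 * conj (a * b) = Complex.normSq (a + b) := by
    rw [← Complex.mul_conj, map_mul, map_add]
    linear_combination ((a + b) * conj b) * ha' + ((a + b) * conj a) * hb'
  calc (a - b) ^ (2 * s) * (a + b) ^ (2 * t) * conj ((a * b) ^ (s + t))
      = ((a - b) ^ 2 * conj (a * b)) ^ s * ((a + b) ^ 2 * conj (a * b)) ^ t := by
        rw [map_pow, pow_add, pow_mul, pow_mul, mul_pow, mul_pow]; ring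
    _ = _ := by
        rw [hsub, hadd, neg_pow, map_mul, map_pow, map_pow]; push_cast; ring

lemma X_add_X_ne_zero {i j : σ} : (X i + X j : MvPolynomial σ ℂ) ≠ 0 := fun h => by
  simpa [two_ne_zero] using congrArg (eval fun _ => 1) h

theorem coeffInner_prod_mul_ne_zero [Fintype σ] [DecidableEq σ] {P : Finset (σ × σ)}
    (hP : ∀ p ∈ P, p.1 ≠ p.2) (tp tm : σ × σ → ℕ) {V : MvPolynomial σ ℂ} (hV : V ≠ 0) :
    coeffInner
      ((∏ p ∈ P, (X p.1 - X p.2) ^ (2 * tp p) * (X p.1 + X p.2) ^ (2 * tm p)) * V)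
      ((∏ p ∈ P, (X p.1 * X p.2) ^ (tp p + tm p)) * V) ≠ 0 := by
  refine coeffInner_ne_zero_of_eval_mul_conj_eq (c := (-1) ^ ∑ p ∈ P, tp p)
    (w := (∏ p ∈ P, (X p.1 - X p.2) ^ tp p * (X p.1 + X p.2) ^ tm p) * V)
    (pow_ne_zero _ (neg_ne_zero.mpr one_ne_zero))
    (mul_ne_zero (prod_ne_zero_iff.mpr fun p hp => mul_ne_zero
      (pow_ne_zero _ (sub_ne_zero.mpr (X_injective.ne (hP p hp)))) (pow_ne_zero _ X_add_X_ne_zero))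
      hV) fun ω hω => ?_
  have hpair : ∀ p ∈ P,
      eval ω ((X p.1 - X p.2) ^ (2 * tp p) * (X p.1 + X p.2) ^ (2 * tm p)) *
        conj (eval ω ((X p.1 * X p.2) ^ (tp p + tm p))) =
      (-1) ^ tp p * Complex.normSq (eval ω ((X p.1 - X p.2) ^ tp p * (X p.1 + X p.2) ^ tm p)) :=
    fun p _ => by
      simp only [map_mul (eval ω), map_pow (eval ω), map_sub (eval ω), map_add (eval ω), eval_X]
      exact sub_pow_two_mul_add_pow_two_mul_conj (hω _) (hω _) _ _
  calc _ = (∏ p ∈ P, eval ω ((X p.1 - X p.2) ^ (2 * tp p) * (X p.1 + X p.2) ^ (2 * tm p)) *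
            conj (eval ω ((X p.1 * X p.2) ^ (tp p + tm p)))) * (eval ω V * conj (eval ω V)) := by
        rw [map_mul, map_mul, map_prod, map_prod, map_mul, map_prod, prod_mul_distrib]; ring
    _ = (∏ p ∈ P, (-1 : ℂ) ^ tp p *
          Complex.normSq (eval ω ((X p.1 - X p.2) ^ tp p * (X p.1 + X p.2) ^ tm p))) *
          Complex.normSq (eval ω V) := by
        rw [prod_congr rfl hpair, Complex.mul_conj]
    _ = _ := by
        rw [prod_mul_distrib, prod_pow_eq_pow_sum, map_mul (eval ω), map_prod (eval ω),
          map_mul Complex.normSq, map_prod Complex.normSq]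
        push_cast
        ring

section scaleCoeff

variable {R : Type*} [CommSemiring R]

noncomputable def scaleCoeff (c : (σ →₀ ℕ) → R) (p : MvPolynomial σ R) : MvPolynomial σ R :=
  ∑ L ∈ p.support, monomial L (c L * coeff L p)

lemma coeff_scaleCoeff (c : (σ →₀ ℕ) → R) (p : MvPolynomial σ R) (L : σ →₀ ℕ) :
    coeff L (scaleCoeff c p) = c L * coeff L p := by
  classical
  rw [scaleCoeff, coeff_sum]
  simp_rw [coeff_monomial]
  rw [sum_ite_eq']
  split_ifs with hL
  · rfl
  · rw [notMem_support_iff.mp hL, mul_zero]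

lemma support_scaleCoeff [NoZeroDivisors R] {c : (σ →₀ ℕ) → R} (hc : ∀ L, c L ≠ 0)
    (p : MvPolynomial σ R) : (scaleCoeff c p).support = p.support := by
  ext L
  simp [coeff_scaleCoeff, hc L]

lemma scaleCoeff_monomial_one_mul (c : (σ →₀ ℕ) → R) (S : σ →₀ ℕ) (p : MvPolynomial σ R) :
    scaleCoeff c (monomial S 1 * p) = monomial S 1 * scaleCoeff (fun L => c (S + L)) p := by
  ext A
  simp only [coeff_scaleCoeff, coeff_monomial_mul', one_mul]
  split_ifs with h
  · rw [add_tsub_cancel_of_le h]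
  · rw [mul_zero]

end scaleCoeff

lemma innerW_eq_sum {n : ℕ} (f g : MvPolynomial (Fin n) ℂ) :
    innerW n f g = ∑ A ∈ g.support,
      ((∏ j, (A j).factorial : ℕ) : ℂ) * coeff A f * conj (coeff A g) :=
  finsum_eq_sum_of_support_subset _ fun A hA => by
    contrapose! hA
    rw [Function.notMem_support, notMem_support_iff.mp hA, map_zero, mul_zero]

lemma innerW_eq_coeffInner_scaleCoeff {n : ℕ} (f g : MvPolynomial (Fin n) ℂ) :
    innerW n f g = coeffInner f (scaleCoeff (fun A => ((∏ j, (A j).factorial : ℕ) : ℂ)) g) := by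
  rw [innerW_eq_sum, coeffInner, support_scaleCoeff fun A =>
    Nat.cast_ne_zero.mpr (prod_ne_zero_iff.mpr fun _ _ => Nat.factorial_ne_zero _)]
  refine sum_congr rfl fun A _ => ?_
  rw [coeff_scaleCoeff, map_mul, Complex.conj_natCast]
  ring

lemma innerW_mul_left {n : ℕ} (φ V g : MvPolynomial (Fin n) ℂ) :
    innerW n (φ * V) g = ∑ K ∈ V.support, coeff K V * innerW n (φ * monomial K 1) g := by
  simp_rw [innerW_eq_sum, mul_sum]
  rw [sum_comm]
  refine sum_congr rfl fun A _ => ?_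
  have hcoeff : coeff A (φ * V) = ∑ K ∈ V.support, coeff K V * coeff A (φ * monomial K 1) := by
    conv_lhs => rw [V.as_sum, mul_sum, coeff_sum]
    refine sum_congr rfl fun K _ => ?_
    rw [coeff_mul_monomial', coeff_mul_monomial']
    split_ifs <;> ring
  rw [hcoeff, mul_sum, sum_mul]
  exact sum_congr rfl fun K _ => by ring

theorem stmt13_general (n : ℕ) (J : Finset (Fin n)) (tp tm : Fin n × Fin n → ℕ)
    (R : MvPolynomial (Fin n) ℂ) (hR : R ≠ 0) :
    ∃ K ∈ R.support,
      innerW n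
        ((∏ p ∈ Finset.univ.filter
            (fun p : Fin n × Fin n => p.1 ∈ J ∧ p.2 ∈ J ∧ p.1 < p.2),
            (MvPolynomial.X p.1 - MvPolynomial.X p.2) ^ (2 * tp p) *
              (MvPolynomial.X p.1 + MvPolynomial.X p.2) ^ (2 * tm p)) *
          MvPolynomial.monomial K 1)
        ((∏ p ∈ Finset.univ.filter
            (fun p : Fin n × Fin n => p.1 ∈ J ∧ p.2 ∈ J ∧ p.1 < p.2),
            (MvPolynomial.X p.1 * MvPolynomial.X p.2) ^ (tp p + tm p)) * R) ≠ 0 := by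
  set P := univ.filter fun p : Fin n × Fin n => p.1 ∈ J ∧ p.2 ∈ J ∧ p.1 < p.2
  have hP : ∀ p ∈ P, p.1 ≠ p.2 := fun p hp => (mem_filter.mp hp).2.2.2.ne
  obtain ⟨S, hS⟩ : ∃ S, ∏ p ∈ P, (X p.1 * X p.2 : MvPolynomial (Fin n) ℂ) ^ (tp p + tm p) =
      monomial S 1 := ⟨_, by simp only [X, monomial_mul, monomial_pow, one_pow, mul_one,
        ← monomial_sum_one]; rfl⟩
  set V := scaleCoeff (fun L => ((∏ j, ((S + L) j).factorial : ℕ) : ℂ)) R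
  have hV : V.support = R.support := support_scaleCoeff (fun L =>
    Nat.cast_ne_zero.mpr (prod_ne_zero_iff.mpr fun _ _ => Nat.factorial_ne_zero _)) R
  have hV0 : V ≠ 0 := fun h => hR (by rw [← support_eq_empty, ← hV, h, support_zero])
  have hweight : ∀ φ, innerW n φ (monomial S 1 * R) = coeffInner φ (monomial S 1 * V) :=
    fun φ => by rw [innerW_eq_coeffInner_scaleCoeff, scaleCoeff_monomial_one_mul]
  have key := coeffInner_prod_mul_ne_zero hP tp tm hV0
  rw [hS, ← hweight, innerW_mul_left, hV] at key
  obtain ⟨K, hK, hne⟩ := exists_ne_zero_of_sum_ne_zero key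
  exact ⟨K, hK, by rw [hS]; exact right_ne_zero_of_mul hne⟩

/-- Lemma 6.3: with
`φ = ∏_{j<j'∈J} (x_j−x_{j'})^{2t⁺}(x_j+x_{j'})^{2t⁻}` and
`ψ = ∏_{j<j'∈J} (x_j x_{j'})^{t⁺+t⁻}`, every nonzero (homogeneous) `R` has a monomial
`x^K` with `⟨φ·x^K, ψ·R⟩ ≠ 0`. -/
theorem stmt13 (n d : ℕ) (J : Finset (Fin n)) (tp tm : Fin n × Fin n → ℕ)
    (R : MvPolynomial (Fin n) ℂ) (hR : R ≠ 0)
    (hhom : R ∈ homogeneousSubmodule (Fin n) ℂ d) :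
    ∃ K ∈ R.support,
      innerW n
        ((∏ p ∈ Finset.univ.filter
            (fun p : Fin n × Fin n => p.1 ∈ J ∧ p.2 ∈ J ∧ p.1 < p.2),
            (MvPolynomial.X p.1 - MvPolynomial.X p.2) ^ (2 * tp p) *
              (MvPolynomial.X p.1 + MvPolynomial.X p.2) ^ (2 * tm p)) *
          MvPolynomial.monomial K 1)
        ((∏ p ∈ Finset.univ.filter
            (fun p : Fin n × Fin n => p.1 ∈ J ∧ p.2 ∈ J ∧ p.1 < p.2),
            (MvPolynomial.X p.1 * MvPolynomial.X p.2) ^ (tp p + tm p)) * R) ≠ 0 :=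
  stmt13_general n J tp tm R hR
end

section
/- Every graph without isolated edges (every 'nice' graph) has a good subset J of its vertex set: a nonempty J ⊆ V such that (J1) the subgraph induced by J has maximum degree at most 1; (J2) the bipartite subgraph G_{J,3} of edges with exactly one endpoint in J has no isolated edges; (J3) each j ∈ J has at most one private neighbour in G_{J,3}; (J4) for each edge e = {j,j'} with both ends in J there is a vertex i_e ∉ J adjacent (in G_{J,3}) to both j and j', neither j nor j' has a private neighbour, and the vertices i_e are distinct for distinct such edges e; (J5) for every isolated edge e of G − J, each endpoint of e has at least one neighbour in J. -/
open Finset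


/-- `i ∉ J` is a private neighbour of `j ∈ J` (in `G_{J,3}`): `j` is the unique
neighbour of `i` belonging to `J`. -/
def PrivateNbr {V : Type} (G : SimpleGraph V) (J : Finset V) (i j : V) : Prop :=
  i ∉ J ∧ j ∈ J ∧ G.Adj i j ∧ ∀ j' ∈ J, G.Adj i j' → j' = j

lemma exists_base {V : Type} [Fintype V] [DecidableEq V] [Nonempty V] (G : SimpleGraph V)
    (hnice : ∀ u v, G.Adj u v →
      (∃ w, w ≠ v ∧ G.Adj u w) ∨ (∃ w, w ≠ u ∧ G.Adj v w)) :
    ∃ I : Finset V, I.Nonempty ∧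
      (∀ x ∈ I, ∀ y ∈ I, ¬ G.Adj x y) ∧
      (∀ K : Finset V, (∀ x ∈ K, ∀ y ∈ K, ¬ G.Adj x y) → K.card ≤ I.card) ∧
      (∀ j ∈ I, ∀ i, G.Adj i j → (∀ w, G.Adj j w → w = i) →
        (∀ j' ∈ I, G.Adj i j' → j' = j) → False) := by
  classical
  obtain ⟨I0, hI0, hmax0⟩ := Finset.exists_max_image
    ((univ : Finset (Finset V)).filter fun K => ∀ x ∈ K, ∀ y ∈ K, ¬ G.Adj x y) Finset.card
    ⟨∅, by simp⟩
  set iso : Finset V → Finset (V × V) := fun K =>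
    univ.filter fun p => p.2 ∈ K ∧ G.Adj p.1 p.2 ∧ (∀ w, G.Adj p.2 w → w = p.1) ∧
      (∀ j ∈ K, G.Adj p.1 j → j = p.2) with hiso
  obtain ⟨I, hIt, hmin⟩ := Finset.exists_min_image
    ((((univ : Finset (Finset V)).filter fun K => ∀ x ∈ K, ∀ y ∈ K, ¬ G.Adj x y)).filter
      fun K => I0.card ≤ K.card)
    (fun K => (iso K).card) ⟨I0, mem_filter.2 ⟨hI0, le_refl _⟩⟩
  have hIt1 := mem_filter.1 hIt
  have hInd : ∀ x ∈ I, ∀ y ∈ I, ¬ G.Adj x y := (mem_filter.1 hIt1.1).2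
  have hIle : I0.card ≤ I.card := hIt1.2
  have hMaxCard : ∀ K : Finset V, (∀ x ∈ K, ∀ y ∈ K, ¬ G.Adj x y) → K.card ≤ I.card := by
    intro K hK
    exact (hmax0 K (mem_filter.2 ⟨mem_univ _, hK⟩)).trans hIle
  have hne : I.Nonempty := by
    have h1 : ({Classical.arbitrary V} : Finset V).card ≤ I.card := by
      apply hMaxCard
      intro x hx y hy
      rw [mem_singleton] at hx hy
      subst hx; subst hy
      exact G.irrefl
    rw [card_singleton] at h1
    exact card_pos.mp h1
  refine ⟨I, hne, hInd, hMaxCard, ?_⟩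
  intro j hjI i hadj hNj hNi
  have hiI : i ∉ I := fun h => hInd i h j hjI hadj
  set I' := insert i (I.erase j) with hI'
  have hI'ind : ∀ x ∈ I', ∀ y ∈ I', ¬ G.Adj x y := by
    intro x hx y hy hxy
    rcases mem_insert.1 hx with rfl | hx' <;> rcases mem_insert.1 hy with rfl | hy'
    · exact G.irrefl hxy
    · exact (mem_erase.1 hy').1 (hNi y (mem_of_mem_erase hy') hxy)
    · exact (mem_erase.1 hx').1 (hNi x (mem_of_mem_erase hx') hxy.symm)
    · exact hInd x (mem_of_mem_erase hx') y (mem_of_mem_erase hy') hxy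
  have hiE : i ∉ I.erase j := fun h => hiI (mem_of_mem_erase h)
  have hcard : I'.card = I.card := by
    rw [hI', card_insert_of_notMem hiE, card_erase_of_mem hjI]
    have : 0 < I.card := card_pos.2 ⟨j, hjI⟩
    omega
  have hI't : I' ∈ (((univ : Finset (Finset V)).filter
      fun K => ∀ x ∈ K, ∀ y ∈ K, ¬ G.Adj x y)).filter fun K => I0.card ≤ K.card := by
    refine mem_filter.2 ⟨mem_filter.2 ⟨mem_univ _, hI'ind⟩, ?_⟩
    rw [hcard]; exact hIle
  have hminle := hmin I' hI't
  have hsub : iso I' ⊆ (iso I).erase (i, j) := by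
    intro p hp
    obtain ⟨-, hpJ, hpadj, hp3, hp4⟩ := mem_filter.1 hp
    rcases mem_insert.1 hpJ with h2 | h2
    · exfalso
      rcases hnice i j hadj with ⟨w, hwne, hw⟩ | ⟨w, hwne, hw⟩
      · have e1 : w = p.1 := hp3 w (h2 ▸ hw)
        have e2 : j = p.1 := hp3 j (h2 ▸ hadj)
        exact hwne (e1.trans e2.symm)
      · exact hwne (hNj w hw)
    · have hp2I : p.2 ∈ I := mem_of_mem_erase h2
      have hp2j : p.2 ≠ j := (mem_erase.1 h2).1
      refine mem_erase.2 ⟨?_, mem_filter.2 ⟨mem_univ _, hp2I, hpadj, hp3, ?_⟩⟩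
      · intro he; exact hp2j (by rw [he])
      · intro k hk hadjk
        have hp1I' : p.1 ∉ I' := fun h => hI'ind p.1 h p.2 hpJ hpadj
        by_cases hkj : k = j
        · subst hkj
          exfalso
          have : p.1 = i := hNj p.1 hadjk.symm
          exact hp1I' (this ▸ mem_insert_self i _)
        · exact hp4 k (mem_insert_of_mem (mem_erase.2 ⟨hkj, hk⟩)) hadjk
  have hijmem : (i, j) ∈ iso I := mem_filter.2 ⟨mem_univ _, hjI, hadj, hNj, hNi⟩
  have h1 : (iso I').card ≤ ((iso I).erase (i, j)).card := card_le_card hsub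
  rw [card_erase_of_mem hijmem] at h1
  have h2 : 0 < (iso I).card := card_pos.2 ⟨_, hijmem⟩
  omega

/-- Every nice graph (no isolated edges) has a good subset `J`:
(J1) the induced subgraph on `J` has maximum degree ≤ 1;
(J2) `G_{J,3}` has no isolated edges;
(J3) every `j ∈ J` has at most one private neighbour;
(J4) every edge inside `J` has a common outside neighbour `i_e`, distinct for distinct edges,
and its ends have no private neighbours;
(J5) each endpoint of an isolated edge of `G − J` has a neighbour in `J`. -/
theorem stmt14 {V : Type} [Fintype V] [DecidableEq V] [Nonempty V] (G : SimpleGraph V)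
    (hnice : ∀ u v, G.Adj u v →
      (∃ w, w ≠ v ∧ G.Adj u w) ∨ (∃ w, w ≠ u ∧ G.Adj v w)) :
    ∃ J : Finset V, J.Nonempty ∧
      -- (J1)
      (∀ j ∈ J, ∀ j₁ ∈ J, ∀ j₂ ∈ J, G.Adj j j₁ → G.Adj j j₂ → j₁ = j₂) ∧
      -- (J2)
      (∀ i ∉ J, ∀ j ∈ J, G.Adj i j →
        (∃ j' ∈ J, j' ≠ j ∧ G.Adj i j') ∨ (∃ i', i' ∉ J ∧ i' ≠ i ∧ G.Adj i' j)) ∧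
      -- (J3)
      (∀ j ∈ J, ∀ i i', PrivateNbr G J i j → PrivateNbr G J i' j → i = i') ∧
      -- (J4)
      (∃ f : V → V → V,
        (∀ j ∈ J, ∀ j' ∈ J, G.Adj j j' →
          f j j' ∉ J ∧ G.Adj (f j j') j ∧ G.Adj (f j j') j' ∧ f j j' = f j' j ∧
          (∀ i, ¬ PrivateNbr G J i j) ∧ (∀ i, ¬ PrivateNbr G J i j')) ∧
        (∀ j₁ ∈ J, ∀ j₂ ∈ J, ∀ j₃ ∈ J, ∀ j₄ ∈ J, G.Adj j₁ j₂ → G.Adj j₃ j₄ →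
          f j₁ j₂ = f j₃ j₄ → ({j₁, j₂} : Finset V) = {j₃, j₄})) ∧
      -- (J5)
      (∀ i i', i ∉ J → i' ∉ J → G.Adj i i' →
        (∀ w, w ∉ J → w ≠ i' → ¬ G.Adj i w) →
        (∀ w, w ∉ J → w ≠ i → ¬ G.Adj i' w) →
        (∃ j ∈ J, G.Adj i j) ∧ (∃ j' ∈ J, G.Adj i' j')) := by
  classical
  obtain ⟨I, hIne, hInd, hMaxCard, hNoIso⟩ := exists_base G hnice
  -- domination
  have hDom : ∀ v, v ∉ I → ∃ k ∈ I, G.Adj v k := by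
    intro v hv
    by_contra h
    push_neg at h
    have hK : ∀ x ∈ insert v I, ∀ y ∈ insert v I, ¬ G.Adj x y := by
      intro x hx y hy hxy
      rcases mem_insert.1 hx with rfl | hx' <;> rcases mem_insert.1 hy with rfl | hy'
      · exact G.irrefl hxy
      · exact h y hy' hxy
      · exact h x hx' hxy.symm
      · exact hInd x hx' y hy' hxy
    have := hMaxCard _ hK
    rw [card_insert_of_notMem hv] at this
    omega
  -- private neighbours of a fixed vertex form a clique
  have hClique : ∀ j ∈ I, ∀ w a, PrivateNbr G I w j → PrivateNbr G I a j → w ≠ a →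
      G.Adj w a := by
    rintro j hj w a ⟨hwI, -, hwadj, hwuni⟩ ⟨haI, -, haadj, hauni⟩ hne
    by_contra hnadj
    have memchar : ∀ x, x ∈ insert w (insert a (I.erase j)) →
        x = w ∨ x = a ∨ (x ∈ I ∧ x ≠ j) := by
      intro x hx
      rcases mem_insert.1 hx with rfl | hx'
      · exact Or.inl rfl
      rcases mem_insert.1 hx' with rfl | hx''
      · exact Or.inr (Or.inl rfl)
      · exact Or.inr (Or.inr ⟨mem_of_mem_erase hx'', (mem_erase.1 hx'').1⟩)
    have hK : ∀ x ∈ insert w (insert a (I.erase j)), ∀ y ∈ insert w (insert a (I.erase j)),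
        ¬ G.Adj x y := by
      intro x hx y hy hxy
      rcases memchar x hx with rfl | rfl | ⟨hxI, hxj⟩ <;>
        rcases memchar y hy with rfl | rfl | ⟨hyI, hyj⟩
      · exact G.irrefl hxy
      · exact hnadj hxy
      · exact hyj (hwuni y hyI hxy)
      · exact hnadj hxy.symm
      · exact G.irrefl hxy
      · exact hyj (hauni y hyI hxy)
      · exact hxj (hwuni x hxI hxy.symm)
      · exact hxj (hauni x hxI hxy.symm)
      · exact hInd x hxI y hyI hxy
    have hwmem : w ∉ insert a (I.erase j) := by
      simp only [mem_insert, mem_erase]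
      push_neg
      exact ⟨hne, fun _ => hwI⟩
    have hamem : a ∉ I.erase j := fun h => haI (mem_of_mem_erase h)
    have := hMaxCard _ hK
    rw [card_insert_of_notMem hwmem, card_insert_of_notMem hamem,
      card_erase_of_mem hj] at this
    have : 0 < I.card := card_pos.2 ⟨j, hj⟩
    omega
  -- the augmentation family
  set Inv : Finset V → Prop := fun K => I ⊆ K ∧ ∀ a ∈ K, a ∉ I →
    ∃ jj, jj ∈ I ∧ G.Adj a jj ∧ (∀ j' ∈ I, G.Adj a j' → j' = jj) ∧
      (∃ w, w ≠ a ∧ w ∉ I ∧ G.Adj w jj ∧ ∀ j' ∈ I, G.Adj w j' → j' = jj) ∧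
      (∀ a' ∈ K, a' ∉ I → a' ≠ a → ¬ G.Adj a' jj) ∧
      (∀ a' ∈ K, a' ∉ I → ¬ G.Adj a a') with hInvdef
  have hInvI : Inv I := ⟨subset_refl I, fun a ha ha' => absurd ha ha'⟩
  obtain ⟨J, hJmem, hJmax⟩ := Finset.exists_max_image
    ((univ : Finset (Finset V)).filter Inv) Finset.card ⟨I, mem_filter.2 ⟨mem_univ _, hInvI⟩⟩
  have hInv : Inv J := (mem_filter.1 hJmem).2
  have hIJ : I ⊆ J := hInv.1
  have hA := hInv.2
  have hMaxl : ∀ i, i ∉ J → ¬ Inv (insert i J) := by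
    intro i hi hbad
    have := hJmax _ (mem_filter.2 ⟨mem_univ _, hbad⟩)
    rw [card_insert_of_notMem hi] at this
    omega
  -- no added vertex has a private neighbour
  have hNoPrivA : ∀ a ∈ J, a ∉ I → ∀ i, ¬ PrivateNbr G J i a := by
    rintro a haJ haI i ⟨hiJ, -, -, huniq⟩
    have hiI : i ∉ I := fun h => hiJ (hIJ h)
    obtain ⟨k, hkI, hk⟩ := hDom i hiI
    exact haI ((huniq k (hIJ hkI) hk) ▸ hkI)
  -- witness extractor for matched vertices
  have hW : ∀ a ∈ J, a ∉ I → ∀ m ∈ I, G.Adj a m →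
      ∃ w, w ∉ J ∧ G.Adj w a ∧ G.Adj w m ∧ (∀ k ∈ I, G.Adj w k → k = m) ∧
        (∀ i, ¬ PrivateNbr G J i a) ∧ (∀ i, ¬ PrivateNbr G J i m) := by
    intro a haJ haI m hmI hadjam
    obtain ⟨ja, hjaI, hadj', huni, ⟨w, hwa, hwI, hwadj, hwuni⟩, h5, h6⟩ := hA a haJ haI
    have hma : m = ja := huni m hmI hadjam
    subst hma
    have hwa' : G.Adj w a :=
      hClique m hjaI w a ⟨hwI, hjaI, hwadj, hwuni⟩ ⟨haI, hjaI, hadj', huni⟩ hwa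
    have hwJ : w ∉ J := fun hwJ' => h6 w hwJ' hwI hwa'.symm
    refine ⟨w, hwJ, hwa', hwadj, hwuni, hNoPrivA a haJ haI, ?_⟩
    rintro i ⟨hiJ, -, hiadj, hiuni⟩
    have hiI : i ∉ I := fun h => hiJ (hIJ h)
    have hia : i ≠ a := fun e => hiJ (e ▸ haJ)
    have hadji : G.Adj i a :=
      hClique m hjaI i a ⟨hiI, hjaI, hiadj, fun k hk h => hiuni k (hIJ hk) h⟩
        ⟨haI, hjaI, hadj', huni⟩ hia
    exact haI ((hiuni a haJ hadji) ▸ hjaI)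
  -- edges inside J are mixed
  have hEdge : ∀ j ∈ J, ∀ j' ∈ J, G.Adj j j' →
      (j ∉ I ∧ j' ∈ I) ∨ (j ∈ I ∧ j' ∉ I) := by
    intro j hj j' hj' hadj
    by_cases h1 : j ∈ I <;> by_cases h2 : j' ∈ I
    · exact absurd hadj (hInd j h1 j' h2)
    · exact Or.inr ⟨h1, h2⟩
    · exact Or.inl ⟨h1, h2⟩
    · obtain ⟨-, -, -, -, -, -, h6⟩ := hA j hj h1
      exact absurd hadj (h6 j' hj' h2)
  -- unmatched vertices of I have at most one private neighbour
  have hKey : ∀ j ∈ I, (∀ a ∈ J, a ∉ I → ¬ G.Adj a j) →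
      ∀ i i', PrivateNbr G J i j → PrivateNbr G J i' j → i = i' := by
    rintro j hjI hum i i' ⟨hiJ, hjJ, hiadj, hiuni⟩ ⟨hi'J, -, hi'adj, hi'uni⟩
    by_contra hne
    refine hMaxl i hiJ ⟨hIJ.trans (subset_insert _ _), ?_⟩
    intro a haIns haI
    rcases mem_insert.1 haIns with rfl | haJ
    · refine ⟨j, hjI, hiadj, fun j' hj' h => hiuni j' (hIJ hj') h,
        ⟨i', fun e => hne e.symm, fun h => hi'J (hIJ h), hi'adj,
          fun j' hj' h => hi'uni j' (hIJ hj') h⟩, ?_, ?_⟩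
      · intro a' ha' ha'I ha'ne
        rcases mem_insert.1 ha' with rfl | ha'J
        · exact absurd rfl ha'ne
        · exact hum a' ha'J ha'I
      · intro a' ha' ha'I hadj'
        rcases mem_insert.1 ha' with rfl | ha'J
        · exact G.irrefl hadj'
        · exact ha'I ((hiuni a' ha'J hadj') ▸ hjI)
    · obtain ⟨ja, hjaI, hadj', huni, hwit, h5, h6⟩ := hA a haJ haI
      refine ⟨ja, hjaI, hadj', huni, hwit, ?_, ?_⟩
      · intro a' ha' ha'I ha'ne
        rcases mem_insert.1 ha' with rfl | ha'J
        · intro hadja'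
          have : ja = j := hiuni ja (hIJ hjaI) hadja'
          exact hum a haJ haI (this ▸ hadj')
        · exact h5 a' ha'J ha'I ha'ne
      · intro a' ha' ha'I
        rcases mem_insert.1 ha' with rfl | ha'J
        · intro hadja'
          exact haI ((hiuni a haJ hadja'.symm) ▸ hjI)
        · exact h6 a' ha'J ha'I
  -- no private neighbours for endpoints of J-edges
  have hNP : ∀ j ∈ J, ∀ j' ∈ J, G.Adj j j' → ∀ i, ¬ PrivateNbr G J i j := by
    intro j hj j' hj' hadj
    rcases hEdge j hj j' hj' hadj with ⟨hn, hi'⟩ | ⟨hi, hn'⟩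
    · exact hNoPrivA j hj hn
    · obtain ⟨-, -, -, -, -, -, hnp⟩ := hW j' hj' hn' j hi hadj.symm
      exact hnp
  obtain ⟨v0, hv0⟩ := hIne
  refine ⟨J, ⟨v0, hIJ hv0⟩, ?_, ?_, ?_, ?_, ?_⟩
  · -- (J1)
    intro j hj j₁ hj₁ j₂ hj₂ hadj1 hadj2
    rcases hEdge j hj j₁ hj₁ hadj1 with ⟨hjn, hj₁I⟩ | ⟨hjI, hj₁n⟩
    · obtain ⟨ja, hjaI, -, huni, -, -, -⟩ := hA j hj hjn
      rcases hEdge j hj j₂ hj₂ hadj2 with ⟨-, hj₂I⟩ | ⟨hjI', -⟩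
      · exact (huni j₁ hj₁I hadj1).trans (huni j₂ hj₂I hadj2).symm
      · exact absurd hjI' hjn
    · rcases hEdge j hj j₂ hj₂ hadj2 with ⟨hjn', -⟩ | ⟨-, hj₂n⟩
      · exact absurd hjI hjn'
      obtain ⟨ja, hjaI, -, huni1, -, h5, -⟩ := hA j₁ hj₁ hj₁n
      have hja : j = ja := huni1 j hjI hadj1.symm
      subst hja
      by_contra hne
      exact h5 j₂ hj₂ hj₂n (fun e => hne e.symm) hadj2.symm
  · -- (J2)
    intro i hiJ j hjJ hadj
    by_contra hcon
    push_neg at hcon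
    obtain ⟨h1, h2⟩ := hcon
    have hiuni : ∀ k ∈ J, G.Adj i k → k = j := by
      intro k hk hik
      by_contra hkj
      exact (h1 k hk hkj) hik
    have hpriv : PrivateNbr G J i j := ⟨hiJ, hjJ, hadj, hiuni⟩
    by_cases hjI : j ∈ I
    · by_cases hm : ∃ a ∈ J, a ∉ I ∧ G.Adj a j
      · obtain ⟨a, haJ, haI, hadja⟩ := hm
        obtain ⟨-, -, -, -, -, -, hnp⟩ := hW a haJ haI j hjI hadja
        exact hnp i hpriv
      · push_neg at hm
        refine hNoIso j hjI i hadj ?_ ?_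
        · intro w hw
          by_cases hwJ : w ∈ J
          · exfalso
            by_cases hwI : w ∈ I
            · exact hInd j hjI w hwI hw
            · exact hm w hwJ hwI hw.symm
          · by_contra hwi
            exact h2 w hwJ (fun e => hwi e) hw.symm
        · intro j' hj' hadj'
          exact hiuni j' (hIJ hj') hadj'
    · exact hNoPrivA j hjJ hjI i hpriv
  · -- (J3)
    intro j hjJ i i' hp hp'
    by_cases hjI : j ∈ I
    · by_cases hm : ∃ a ∈ J, a ∉ I ∧ G.Adj a j
      · obtain ⟨a, haJ, haI, hadja⟩ := hm
        obtain ⟨-, -, -, -, -, -, hnp⟩ := hW a haJ haI j hjI hadja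
        exact absurd hp (hnp i)
      · push_neg at hm
        exact hKey j hjI hm i i' hp hp'
    · exact absurd hp (hNoPrivA j hjJ hjI i)
  · -- (J4)
    set Q : Finset V → Prop := fun s =>
      ∃ w, w ∉ J ∧ (∀ x ∈ s, G.Adj w x) ∧ (∀ k ∈ I, G.Adj w k → k ∈ s) with hQdef
    set g : Finset V → V := fun s => if h : Q s then h.choose else Classical.arbitrary V
      with hgdef
    have hg : ∀ s, Q s → g s ∉ J ∧ (∀ x ∈ s, G.Adj (g s) x) ∧
        (∀ k ∈ I, G.Adj (g s) k → k ∈ s) := by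
      intro s h
      rw [hgdef]
      simp only [dif_pos h]
      exact h.choose_spec
    have hQall : ∀ j ∈ J, ∀ j' ∈ J, G.Adj j j' → Q ({j, j'} : Finset V) := by
      intro j hj j' hj' hadj
      rcases hEdge j hj j' hj' hadj with ⟨hn, hi'⟩ | ⟨hi, hn'⟩
      · obtain ⟨w, hwJ, hwa, hwm, hwuni, -, -⟩ := hW j hj hn j' hi' hadj
        refine ⟨w, hwJ, ?_, ?_⟩
        · intro x hx
          rcases mem_insert.1 hx with rfl | hx'
          · exact hwa
          · rw [mem_singleton] at hx'; exact hx' ▸ hwm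
        · intro k hk h
          rw [hwuni k hk h]
          exact mem_insert_of_mem (mem_singleton_self _)
      · obtain ⟨w, hwJ, hwa, hwm, hwuni, -, -⟩ := hW j' hj' hn' j hi hadj.symm
        refine ⟨w, hwJ, ?_, ?_⟩
        · intro x hx
          rcases mem_insert.1 hx with rfl | hx'
          · exact hwm
          · rw [mem_singleton] at hx'; exact hx' ▸ hwa
        · intro k hk h
          rw [hwuni k hk h]
          exact mem_insert_self _ _
    refine ⟨fun x y => g {x, y}, ?_, ?_⟩
    · intro j hj j' hj' hadj
      obtain ⟨hw1, hw2, hw3⟩ := hg _ (hQall j hj j' hj' hadj)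
      exact ⟨hw1, hw2 j (mem_insert_self _ _),
        hw2 j' (mem_insert_of_mem (mem_singleton_self _)),
        by show g {j, j'} = g {j', j}; rw [Finset.pair_comm j j'],
        hNP j hj j' hj' hadj, hNP j' hj' j hj hadj.symm⟩
    · intro j₁ h1 j₂ h2 j₃ h3 j₄ h4 ha12 ha34 heq
      obtain ⟨w1J, w1adj, w1uni⟩ := hg _ (hQall j₁ h1 j₂ h2 ha12)
      obtain ⟨w2J, w2adj, w2uni⟩ := hg _ (hQall j₃ h3 j₄ h4 ha34)
      have heq' : g {j₁, j₂} = g {j₃, j₄} := heq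
      rw [← heq'] at w2adj w2uni
      have key : ∀ (a₁ m₁ a₂ m₂ : V), ({j₁, j₂} : Finset V) = {a₁, m₁} →
          ({j₃, j₄} : Finset V) = {a₂, m₂} →
          a₁ ∈ J → a₁ ∉ I → m₁ ∈ I → G.Adj a₁ m₁ →
          a₂ ∈ J → a₂ ∉ I → m₂ ∈ I → G.Adj a₂ m₂ →
          ({j₁, j₂} : Finset V) = {j₃, j₄} := by
        intro a₁ m₁ a₂ m₂ hs ht ha₁J ha₁I hm₁I hadj₁ ha₂J ha₂I hm₂I hadj₂
        have hadjwm : G.Adj (g {j₁, j₂}) m₁ := by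
          apply w1adj
          rw [hs]
          exact mem_insert_of_mem (mem_singleton_self _)
        have hmem : m₁ ∈ ({j₃, j₄} : Finset V) := w2uni m₁ hm₁I hadjwm
        rw [ht] at hmem
        rcases mem_insert.1 hmem with rfl | hmem'
        · exact absurd hm₁I ha₂I
        rw [mem_singleton] at hmem'
        subst hmem'
        obtain ⟨ja, hjaI, hadj', huni, -, h5, -⟩ := hA a₂ ha₂J ha₂I
        have hja : m₁ = ja := huni m₁ hm₁I hadj₂
        subst hja
        have ha12' : a₁ = a₂ := by
          by_contra hne
          exact h5 a₁ ha₁J ha₁I hne hadj₁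
        rw [hs, ht, ha12']
      rcases hEdge j₁ h1 j₂ h2 ha12 with ⟨hn1, hi2⟩ | ⟨hi1, hn2⟩ <;>
        rcases hEdge j₃ h3 j₄ h4 ha34 with ⟨hn3, hi4⟩ | ⟨hi3, hn4⟩
      · exact key j₁ j₂ j₃ j₄ rfl rfl h1 hn1 hi2 ha12 h3 hn3 hi4 ha34
      · exact key j₁ j₂ j₄ j₃ rfl (Finset.pair_comm _ _) h1 hn1 hi2 ha12 h4 hn4 hi3 ha34.symm
      · exact key j₂ j₁ j₃ j₄ (Finset.pair_comm _ _) rfl h2 hn2 hi1 ha12.symm h3 hn3 hi4 ha34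
      · exact key j₂ j₁ j₄ j₃ (Finset.pair_comm _ _) (Finset.pair_comm _ _) h2 hn2 hi1
          ha12.symm h4 hn4 hi3 ha34.symm
  · -- (J5)
    intro i i' hiJ hi'J hadj _ _
    have hiI : i ∉ I := fun h => hiJ (hIJ h)
    have hi'I : i' ∉ I := fun h => hi'J (hIJ h)
    obtain ⟨k, hkI, hk⟩ := hDom i hiI
    obtain ⟨k', hk'I, hk'⟩ := hDom i' hi'I
    exact ⟨⟨k, hIJ hkI, hk⟩, ⟨k', hIJ hk'I, hk'⟩⟩
end

section
/- The path P_4 on 4 vertices (a path of length 3) is not total weight (1,2)-choosable: there exist a real number assigned to each vertex and sets of 2 real numbers assigned to each edge such that no choice of edge weights from the lists yields a proper total weighting. -/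
/-- The path `P_4` is not total weight `(1,2)`-choosable: there are vertex weights
(lists of size 1) and edge lists of size 2 admitting no proper total weighting. -/
theorem stmt16 :
    ∃ (fv : Fin 4 → ℝ) (L : Fin 3 → Finset ℝ),
      (∀ k, (L k).card = 2) ∧
      ∀ w : Fin 3 → ℝ, (∀ k, w k ∈ L k) →
        fv 0 + w 0 = fv 1 + (w 0 + w 1) ∨
        fv 1 + (w 0 + w 1) = fv 2 + (w 1 + w 2) ∨
        fv 2 + (w 1 + w 2) = fv 3 + w 2 := by
  refine ⟨![1, 0, 0, 0], fun _ => {0, 1}, fun k => by norm_num, ?_⟩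
  intro w hw
  have h1 := hw 1
  simp only [Finset.mem_insert, Finset.mem_singleton] at h1
  rcases h1 with h | h
  · right; right; simp [h]
  · left; simp [h]; ring
end

section
/- Let G be a connected non-bipartite graph that is edge-weight k-choosable. Then G is total weight (1,k)-choosable. (Given a (1,k)-list assignment, one can shift edge lists along an odd closed walk through each vertex to reduce all vertex lists to {0}, reducing the problem to edge-weight choosability.) -/
/-!
The neighbour-sum functions `u ↦ ∑_{x ∈ N(u)} w u x` of symmetric edge weightings `w` form a
subspace containing `e_a + e_c` for every edge `ac`. Telescoping along a walk from `a` to `b`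
gives `e_a ± e_b`, with sign `+` when the walk is odd; an odd closed walk at `a`, which exists
in a connected non-bipartite graph, gives `2 e_a`. So every vertex weighting `f` is the
neighbour-sum function of a symmetric `d`, and shifting each edge list by `d` turns the total
weighting problem with vertex weights `f` into an edge weighting problem with lists of the
same size.
-/

open Finset

namespace SimpleGraph

variable {V : Type*} {G : SimpleGraph V}

theorem Connected.exists_odd_loop (hconn : G.Connected) (hnb : ¬G.Colorable 2) (v : V) :
    ∃ p : G.Walk v v, Odd p.length := by
  obtain ⟨u, c, hc⟩ : ∃ u, ∃ c : G.Walk u u, Odd c.length := by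
    simpa [two_colorable_iff_forall_loop_even] using hnb
  obtain ⟨q⟩ := hconn.preconnected v u
  refine ⟨q.append (c.append q.reverse), ?_⟩
  rw [Walk.length_append, Walk.length_append, Walk.length_reverse, add_left_comm, ← two_mul]
  exact hc.add_even (even_two_mul _)

variable (G) (K : Type*) [Field K] [G.LocallyFinite]

def symmNeighborSums : Submodule K (V → K) where
  carrier := {f | ∃ w : V → V → K, (∀ u v, w u v = w v u) ∧
    ∀ u, ∑ x ∈ G.neighborFinset u, w u x = f u}
  add_mem' := by
    rintro f f' ⟨w, hw, hf⟩ ⟨w', hw', hf'⟩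
    exact ⟨w + w', fun u v => by simp [hw u v, hw' u v],
      fun u => by simp [sum_add_distrib, hf, hf']⟩
  zero_mem' := ⟨0, fun _ _ => rfl, fun _ => by simp⟩
  smul_mem' := by
    rintro c f ⟨w, hw, hf⟩
    exact ⟨c • w, fun u v => by simp [hw u v], fun u => by simp [← mul_sum, hf]⟩

variable {G K}

section

variable [DecidableEq V]

theorem single_add_single_mem_symmNeighborSums {a c : V} (h : G.Adj a c) :
    Pi.single a 1 + Pi.single c 1 ∈ G.symmNeighborSums K := by
  refine ⟨fun u x => (if u = a ∧ x = c then 1 else 0) + (if u = c ∧ x = a then 1 else 0),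
    fun u v => by dsimp only; rw [add_comm]; simp only [and_comm], fun u => ?_⟩
  simp +contextual [sum_add_distrib, ite_and, Pi.single_apply, h, h.symm]

theorem single_add_neg_one_pow_smul_single_mem_symmNeighborSums {a b : V} (p : G.Walk a b) :
    Pi.single a 1 + (-1 : K) ^ (p.length + 1) • Pi.single b 1 ∈ G.symmNeighborSums K := by
  induction p with
  | nil => simp
  | @cons a c b h p ih =>
    convert sub_mem (single_add_single_mem_symmNeighborSums (K := K) h) ih using 1
    rw [Walk.length_cons, pow_succ]
    simp only [mul_neg_one, neg_smul]
    abel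

end

theorem symmNeighborSums_eq_top [Finite V] [NeZero (2 : K)] (hconn : G.Connected)
    (hnb : ¬G.Colorable 2) :
    G.symmNeighborSums K = ⊤ := by
  classical
  rw [eq_top_iff, ← (Pi.basisFun K V).span_eq, Submodule.span_le]
  rintro _ ⟨a, rfl⟩
  obtain ⟨p, hp⟩ := hconn.exists_odd_loop hnb a
  have h := single_add_neg_one_pow_smul_single_mem_symmNeighborSums (K := K) p
  rw [hp.add_one.neg_one_pow, one_smul, ← two_smul K] at h
  simpa [smul_smul, inv_mul_cancel₀ (two_ne_zero (α := K))] using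
    Submodule.smul_mem _ (2⁻¹ : K) h

end SimpleGraph

open SimpleGraph in
theorem stmt17_general {V : Type} [Fintype V] (G : SimpleGraph V)
    [DecidableRel G.Adj]
    (hconn : G.Connected) (hnb : ¬ G.Colorable 2) (k : ℕ)
    (hew : ∀ L : V → V → Finset ℝ, (∀ u v, L u v = L v u) →
      (∀ u v, G.Adj u v → (L u v).card = k) →
      ∃ w : V → V → ℝ, (∀ u v, w u v = w v u) ∧ (∀ u v, G.Adj u v → w u v ∈ L u v) ∧
        ∀ u v, G.Adj u v →
          ∑ x ∈ G.neighborFinset u, w u x ≠ ∑ x ∈ G.neighborFinset v, w v x) :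
    ∀ (fv : V → ℝ) (L : V → V → Finset ℝ), (∀ u v, L u v = L v u) →
      (∀ u v, G.Adj u v → (L u v).card = k) →
      ∃ w : V → V → ℝ, (∀ u v, w u v = w v u) ∧ (∀ u v, G.Adj u v → w u v ∈ L u v) ∧
        ∀ u v, G.Adj u v →
          fv u + ∑ x ∈ G.neighborFinset u, w u x ≠
            fv v + ∑ x ∈ G.neighborFinset v, w v x := by
  intro fv L hLsymm hLcard
  obtain ⟨d, hdsymm, hdsum⟩ : fv ∈ G.symmNeighborSums ℝ := by
    rw [symmNeighborSums_eq_top hconn hnb]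
    trivial
  obtain ⟨w, hwsymm, hwmem, hwne⟩ := hew (fun u v => (L u v).image (· + d u v))
    (fun u v => by simp only [hLsymm u v, hdsymm u v])
    (fun u v h => by rw [card_image_of_injective _ (add_left_injective _), hLcard u v h])
  refine ⟨fun u v => w u v - d u v, fun u v => by simp only [hwsymm u v, hdsymm u v],
    fun u v h => ?_, fun u v h => ?_⟩
  · obtain ⟨r, hr, hrw⟩ := mem_image.1 (hwmem u v h)
    simpa only [← hrw, add_sub_cancel_right] using hr
  · simpa only [sum_sub_distrib, hdsum, add_sub_cancel] using hwne u v h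

/-- A connected non-bipartite graph that is edge-weight `k`-choosable is total weight
`(1,k)`-choosable. Edge weightings/lists are encoded as symmetric functions on ordered
pairs of adjacent vertices, and the weighted sum at `v` is `∑_{x ∈ N(v)} w v x`. -/
theorem stmt17 {V : Type} [Fintype V] [DecidableEq V] (G : SimpleGraph V)
    [DecidableRel G.Adj]
    (hconn : G.Connected) (hnb : ¬ G.Colorable 2) (k : ℕ)
    (hew : ∀ L : V → V → Finset ℝ, (∀ u v, L u v = L v u) →
      (∀ u v, G.Adj u v → (L u v).card = k) →
      ∃ w : V → V → ℝ, (∀ u v, w u v = w v u) ∧ (∀ u v, G.Adj u v → w u v ∈ L u v) ∧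
        ∀ u v, G.Adj u v →
          ∑ x ∈ G.neighborFinset u, w u x ≠ ∑ x ∈ G.neighborFinset v, w v x) :
    ∀ (fv : V → ℝ) (L : V → V → Finset ℝ), (∀ u v, L u v = L v u) →
      (∀ u v, G.Adj u v → (L u v).card = k) →
      ∃ w : V → V → ℝ, (∀ u v, w u v = w v u) ∧ (∀ u v, G.Adj u v → w u v ∈ L u v) ∧
        ∀ u v, G.Adj u v →
          fv u + ∑ x ∈ G.neighborFinset u, w u x ≠
            fv v + ∑ x ∈ G.neighborFinset v, w v x :=
  stmt17_general G hconn hnb k hew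
end

section
/- In a minimum counterexample setting the following reduction holds concretely: let G' be a graph with edge set E' and suppose K' ∈ ℕ^{E'} with ∑_{e∈E'} K'(e) = |E'| satisfies per(C_{G'}(K')) ≠ 0. Let G be obtained from G' by attaching a new path u,v of length 2 at a vertex w of G' (so G has new vertices u, v, new edges e_1 = {u,v}, e_2 = {u,w}, with v of degree 1 and u of degree 2). Define K ∈ ℕ^{E(G)} by K(e) = K'(e) for e ∈ E', K(e_1) = K(e_2) = 1. Then per(C_G(K)) ≠ 0. -/
open Matrix

/-- The matrix `C_G` of a graph whose edges are given by ordered endpoint pairs: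
`c_{ee'} = [e' touches the smaller end of e] − [e' touches the larger end of e]`. -/
def Cmat {n : ℕ} {E : Type} (ends : E → Fin n × Fin n) : Matrix E E ℂ :=
  Matrix.of fun e e' =>
    (if (ends e).1 = (ends e').1 ∨ (ends e).1 = (ends e').2 then 1 else 0)
      - (if (ends e).2 = (ends e').1 ∨ (ends e).2 = (ends e').2 then 1 else 0)

/-- Endpoints for the graph `G` obtained from `G'` by attaching a pendant path of length 2
at vertex `w`: new vertices `u = n`, `v = n+1`; new edges `e₁ = {u,v}` and `e₂ = {w,u}`. -/
def endsG {n : ℕ} {E' : Type} (ends' : E' → Fin n × Fin n) (w : Fin n) :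
    E' ⊕ Fin 2 → Fin (n + 2) × Fin (n + 2)
  | Sum.inl e => (Fin.castAdd 2 (ends' e).1, Fin.castAdd 2 (ends' e).2)
  | Sum.inr 0 => (⟨n, by omega⟩, ⟨n + 1, by omega⟩)
  | Sum.inr 1 => (Fin.castAdd 2 w, ⟨n, by omega⟩)

section CmatAux
variable {n : ℕ} {E' : Type} (ends' : E' → Fin n × Fin n) (w : Fin n)

lemma CmatG_ll (e f : E') :
    Cmat (endsG ends' w) (Sum.inl e) (Sum.inl f) = Cmat ends' e f := by
  simp [Cmat, endsG, Fin.ext_iff]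

lemma CmatG_l0 (e : E') : Cmat (endsG ends' w) (Sum.inl e) (Sum.inr 0) = 0 := by
  have h1 := (ends' e).1.isLt
  have h2 := (ends' e).2.isLt
  simp only [Cmat, endsG, Matrix.of_apply, Fin.ext_iff, Fin.coe_castAdd]
  rw [if_neg (by omega), if_neg (by omega)]; ring

lemma CmatG_0l (f : E') : Cmat (endsG ends' w) (Sum.inr 0) (Sum.inl f) = 0 := by
  have h1 := (ends' f).1.isLt
  have h2 := (ends' f).2.isLt
  simp only [Cmat, endsG, Matrix.of_apply, Fin.ext_iff, Fin.coe_castAdd]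
  rw [if_neg (by omega), if_neg (by omega)]; ring

lemma CmatG_00 : Cmat (endsG ends' w) (Sum.inr 0) (Sum.inr 0) = 0 := by
  simp only [Cmat, endsG, Matrix.of_apply, Fin.ext_iff, Fin.coe_castAdd]
  rw [if_pos (by simp), if_pos (by simp)]; ring

lemma CmatG_01 : Cmat (endsG ends' w) (Sum.inr 0) (Sum.inr 1) = 1 := by
  have hw := w.isLt
  simp only [Cmat, endsG, Matrix.of_apply, Fin.ext_iff, Fin.coe_castAdd]
  rw [if_pos (by simp), if_neg (by omega)]; ring

lemma CmatG_10 : Cmat (endsG ends' w) (Sum.inr 1) (Sum.inr 0) = -1 := by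
  have hw := w.isLt
  simp only [Cmat, endsG, Matrix.of_apply, Fin.ext_iff, Fin.coe_castAdd]
  rw [if_neg (by omega), if_pos (by simp)]; ring

end CmatAux

/-- If `per(C_{G'}(K')) ≠ 0` for some `K'` with `∑ K' = |E'|`, and `G` is obtained from `G'`
by attaching a pendant path `u,v` of length 2 at `w` with `K(e₁) = K(e₂) = 1`, then
`per(C_G(K)) ≠ 0`. Column multiplicities are encoded by column-selection functions. -/
theorem stmt18 (n : ℕ) (E' : Type) [Fintype E'] [DecidableEq E']
    (ends' : E' → Fin n × Fin n)
    (horder : ∀ e, (ends' e).1 < (ends' e).2)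
    (hinj : Function.Injective ends')
    (w : Fin n)
    (K' : E' → ℕ) (hsum : ∑ e, K' e = Fintype.card E')
    (c' : E' → E')
    (hc' : ∀ e, (Finset.univ.filter fun f => c' f = e).card = K' e)
    (hper : Matrix.permanent (Matrix.of fun e f => Cmat ends' e (c' f)) ≠ 0) :
    Matrix.permanent
      (Matrix.of fun e f => Cmat (endsG ends' w) e (Sum.map c' id f)) ≠ 0 := by
  classical
  set A : Matrix E' E' ℂ := Matrix.of fun e f => Cmat ends' e (c' f) with hA
  set M : Matrix (E' ⊕ Fin 2) (E' ⊕ Fin 2) ℂ :=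
    Matrix.of fun e f => Cmat (endsG ends' w) e (Sum.map c' id f) with hM
  -- entry computations
  have hMll : ∀ e f : E', M (Sum.inl e) (Sum.inl f) = A e f := by
    intro e f; simpa [hM, hA] using CmatG_ll ends' w e (c' f)
  have hMl0 : ∀ e : E', M (Sum.inl e) (Sum.inr 0) = 0 := by
    intro e; simpa [hM] using CmatG_l0 ends' w e
  have hM0l : ∀ f : E', M (Sum.inr 0) (Sum.inl f) = 0 := by
    intro f; simpa [hM] using CmatG_0l ends' w (c' f)
  have hM00 : M (Sum.inr 0) (Sum.inr 0) = 0 := by simpa [hM] using CmatG_00 ends' w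
  have hM01 : M (Sum.inr 0) (Sum.inr 1) = 1 := by simpa [hM] using CmatG_01 ends' w
  have hM10 : M (Sum.inr 1) (Sum.inr 0) = -1 := by simpa [hM] using CmatG_10 ends' w
  set ι : Equiv.Perm E' → Equiv.Perm (E' ⊕ Fin 2) :=
    fun σ => Equiv.sumCongr σ (Equiv.swap 0 1) with hιdef
  have hι : Function.Injective ι := by
    intro σ τ h
    ext e
    have := congrArg (fun π : Equiv.Perm (E' ⊕ Fin 2) => π (Sum.inl e)) h
    simpa [hιdef] using this
  have hzero : ∀ σ : Equiv.Perm (E' ⊕ Fin 2), σ ∉ Finset.image ι Finset.univ →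
      ∏ i, M (σ i) i = 0 := by
    intro σ hσ
    by_contra h
    have hne : ∀ i, M (σ i) i ≠ 0 := by
      intro i h0
      exact h (Finset.prod_eq_zero (Finset.mem_univ i) h0)
    have fin2 : ∀ j : Fin 2, j = 0 ∨ j = 1 := by decide
    have h01 : σ (Sum.inr 0) = Sum.inr 1 := by
      have hc := hne (Sum.inr 0)
      rcases hh : σ (Sum.inr 0) with e | j
      · rw [hh, hMl0] at hc; exact absurd rfl hc
      · rcases fin2 j with rfl | rfl
        · rw [hh, hM00] at hc; exact absurd rfl hc
        · rfl
    have h10 : σ (Sum.inr 1) = Sum.inr 0 := by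
      rcases hh : σ (Sum.inr 1) with e | j
      · -- then σ⁻¹ (inr 0) must be some inl f, contradiction
        exfalso
        rcases hi : σ.symm (Sum.inr 0) with f | j
        · have : σ (Sum.inl f) = Sum.inr 0 := ((Equiv.symm_apply_eq σ).mp hi).symm
          have hc := hne (Sum.inl f)
          rw [this, hM0l] at hc
          exact hc rfl
        · rcases fin2 j with rfl | rfl
          · have : σ (Sum.inr 0) = Sum.inr 0 := ((Equiv.symm_apply_eq σ).mp hi).symm
            rw [h01] at this
            exact (by simp at this)
          · have : σ (Sum.inr 1) = Sum.inr 0 := ((Equiv.symm_apply_eq σ).mp hi).symm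
            rw [hh] at this
            exact (by simp at this)
      · rcases fin2 j with rfl | rfl
        · rfl
        · exfalso
          have := σ.injective (h01.trans hh.symm)
          simp at this
    have hpres : ∀ e : E', ∃ f : E', σ (Sum.inl e) = Sum.inl f := by
      intro e
      rcases hh : σ (Sum.inl e) with f | j
      · exact ⟨f, rfl⟩
      · exfalso
        rcases fin2 j with rfl | rfl
        · have := σ.injective (h10.trans hh.symm)
          simp at this
        · have := σ.injective (h01.trans hh.symm)
          simp at this
    choose g hg using hpres
    have hginj : Function.Injective g := by
      intro a b hab
      have : σ (Sum.inl a) = σ (Sum.inl b) := by rw [hg, hg, hab]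
      simpa using σ.injective this
    have hgbij : Function.Bijective g := Finite.injective_iff_bijective.mp hginj
    refine hσ ?_
    refine Finset.mem_image.mpr ⟨Equiv.ofBijective g hgbij, Finset.mem_univ _, ?_⟩
    ext x
    rcases x with e | j
    · simp [hιdef, Equiv.ofBijective, (hg e).symm]
    · rcases fin2 j with rfl | rfl
      · simpa [hιdef] using h01.symm
      · simpa [hιdef] using h10.symm
  have key : M.permanent = ∑ σ' : Equiv.Perm E', ∏ i, M (ι σ' i) i := by
    rw [Matrix.permanent,
      ← Finset.sum_subset (Finset.subset_univ (Finset.image ι Finset.univ))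
        (fun σ _ h => hzero σ h),
      Finset.sum_image (fun a _ b _ h => hι h)]
  have term : ∀ σ' : Equiv.Perm E',
      ∏ i, M (ι σ' i) i = (-1) * ∏ e, A (σ' e) e := by
    intro σ'
    rw [Fintype.prod_sum_type]
    have h2 : ∏ j : Fin 2, M (ι σ' (Sum.inr j)) (Sum.inr j) = -1 := by
      rw [Fin.prod_univ_two]
      have e0 : ι σ' (Sum.inr 0) = Sum.inr 1 := by simp [hιdef]
      have e1 : ι σ' (Sum.inr 1) = Sum.inr 0 := by simp [hιdef]
      rw [e0, e1, hM10, hM01]; ring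
    have h1 : ∏ e : E', M (ι σ' (Sum.inl e)) (Sum.inl e) = ∏ e, A (σ' e) e := by
      refine Finset.prod_congr rfl fun e _ => ?_
      have : ι σ' (Sum.inl e) = Sum.inl (σ' e) := by simp [hιdef]
      rw [this, hMll]
    rw [h1, h2]; ring
  rw [key]
  simp only [term]
  rw [← Finset.mul_sum]
  have : ∑ σ' : Equiv.Perm E', ∏ e, A (σ' e) e = A.permanent := rfl
  rw [this]
  simpa using hper
end

section
/- Let J ⊆ {1,...,n}, let t⁺_{jj'}, t⁻_{jj'} ∈ ℕ for j < j' in J, set T = ∑_{j<j'} t⁺_{jj'}, and for each multi-index K define the functions on the torus as usual. For any finite list of distinct monomials x^{K_1},...,x^{K_l}, the l×l matrix A with entries a_{jk} = (φ(x)x^{K_j}, ψ(x)x^{K_k}) — where φ(x) = ∏_{j<j'}(x_j−x_{j'})^{2t⁺}(x_j+x_{j'})^{2t⁻}, ψ(x) = ∏_{j<j'}(x_j x_{j'})^{t⁺+t⁻}, and (f,g) = ∑_K coe(x^K,f)conj(coe(x^K,g)) — satisfies: (−1)^T · y A y* > 0 for every nonzero y ∈ ℂ^l. In particular A is nonsingular.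 -/
/-!
View polynomials as Laurent polynomials, i.e. as functions on the torus `|x_i| = 1`, where
`conj x_i = x_i⁻¹`. Then `(f, g)` is the constant term of `f · ḡ`, and since
`(x_a - x_b)² / (x_a x_b) = -|x_a - x_b|²` and `(x_a + x_b)² / (x_a x_b) = |x_a + x_b|²` there,
`φ · ψ̄ = (-1)^T |U|²` with `U = ∏ (x_a - x_b)^{t⁺} (x_a + x_b)^{t⁻}`. Hence
`(-1)^T · y A y* = (U F, U F) > 0` for `F = ∑ y_k x^{K_k}`, as `U F ≠ 0`.
-/

open MvPolynomial ComplexConjugate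

/-- `(f,g) = ∑_K coe(x^K,f) conj(coe(x^K,g))`. -/
noncomputable def pairW (n : ℕ) (f g : MvPolynomial (Fin n) ℂ) : ℂ :=
  ∑ᶠ K : Fin n →₀ ℕ, coeff K f * conj (coeff K g)

theorem sub_pow_mul_add_pow_mul_pow {R : Type*} [CommRing R] {a b a' b' : R}
    (ha : a * a' = 1) (hb : b * b' = 1) (s t : ℕ) :
    (a - b) ^ (2 * s) * (a + b) ^ (2 * t) * (a' * b') ^ (s + t) =
      (-1) ^ s * ((a - b) ^ s * (a + b) ^ t * ((a' - b') ^ s * (a' + b') ^ t)) := by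
  have hsub : (a - b) ^ 2 * (a' * b') = -((a - b) * (a' - b')) := by
    linear_combination (a - b) * b' * ha - (a - b) * a' * hb
  have hadd : (a + b) ^ 2 * (a' * b') = (a + b) * (a' + b') := by
    linear_combination (a + b) * b' * ha + (a + b) * a' * hb
  calc (a - b) ^ (2 * s) * (a + b) ^ (2 * t) * (a' * b') ^ (s + t)
      = ((a - b) ^ 2) ^ s * (a' * b') ^ s * (((a + b) ^ 2) ^ t * (a' * b') ^ t) := by
        rw [pow_mul, pow_mul, pow_add]; ring
    _ = (-1 * ((a - b) * (a' - b'))) ^ s * ((a + b) * (a' + b')) ^ t := by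
        rw [← mul_pow, ← mul_pow, hsub, hadd, neg_one_mul]
    _ = _ := by simp only [mul_pow]; ring

theorem MvPolynomial.X_add_X_ne_zero {σ R : Type*} [CommRing R] [Nontrivial R] {a b : σ}
    (hab : a ≠ b) : (X a + X b : MvPolynomial σ R) ≠ 0 := by
  classical
  intro h
  simpa [hab.symm] using congrArg (coeff (Finsupp.single a 1)) h

theorem MvPolynomial.sum_smul_monomial_ne_zero {σ ι R : Type*} [Fintype ι] [CommRing R]
    {Ks : ι → σ →₀ ℕ} (hKs : Function.Injective Ks) {y : ι → R} (hy : y ≠ 0) :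
    ∑ j, y j • monomial (Ks j) (1 : R) ≠ 0 := by
  have hli := (basisMonomials σ R).linearIndependent.comp Ks hKs
  rw [coe_basisMonomials] at hli
  obtain ⟨j, hj⟩ := Function.ne_iff.mp hy
  exact fun h => hj (Fintype.linearIndependent_iff.mp hli y h j)

theorem Matrix.det_ne_zero_of_sum_mul_conj_ne_zero {ι : Type*} [Fintype ι] [DecidableEq ι]
    (A : Matrix ι ι ℂ) (hA : ∀ y : ι → ℂ, y ≠ 0 → ∑ j, ∑ k, y j * A j k * conj (y k) ≠ 0) :
    A.det ≠ 0 := by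
  intro hdet
  obtain ⟨v, hv0, hv⟩ := Matrix.exists_vecMul_eq_zero_iff.mpr hdet
  refine hA v hv0 ?_
  rw [Finset.sum_comm]
  simp_rw [← Finset.sum_mul]
  exact Finset.sum_eq_zero fun k _ => by
    rw [show ∑ j, v j * A j k = vecMul v A k from rfl, hv, Pi.zero_apply, zero_mul]

noncomputable section

namespace TorusPairing

open scoped ComplexOrder

section Laurent

variable {σ : Type*}

abbrev Laurent (σ : Type*) := AddMonoidAlgebra ℂ (σ →₀ ℤ)

def natToInt : (σ →₀ ℕ) →+ (σ →₀ ℤ) := Finsupp.mapRange.addMonoidHom (Nat.castAddMonoidHom ℤ)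

lemma natToInt_injective : Function.Injective (natToInt (σ := σ)) :=
  Finsupp.mapRange_injective _ (map_zero _) Nat.cast_injective

def toLaurent : MvPolynomial σ ℂ →ₐ[ℂ] Laurent σ :=
  AddMonoidAlgebra.mapDomainAlgHom ℂ ℂ natToInt

/-- Complex conjugation of functions on the torus: `conj (c x^a) = conj c x^(-a)` there. -/
def conjInv : Laurent σ →+* Laurent σ :=
  (AddMonoidAlgebra.mapRingHom _ (starRingEnd ℂ)).comp
    (AddMonoidAlgebra.mapDomainRingEquiv ℂ (AddEquiv.neg _)).toRingHom

lemma coeff_conjInv (P : Laurent σ) (a : σ →₀ ℤ) :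
    (conjInv P).coeff a = conj (P.coeff (-a)) := by
  simp [conjInv]

lemma conjInv_single (a : σ →₀ ℤ) (c : ℂ) :
    conjInv (AddMonoidAlgebra.single a c) = AddMonoidAlgebra.single (-a) (conj c) := by
  simp [conjInv]

lemma conjInv_smul (c : ℂ) (P : Laurent σ) : conjInv (c • P) = conj c • conjInv P := by
  ext a; simp [coeff_conjInv]

lemma toLaurent_X_mul_conjInv (i : σ) : toLaurent (X i) * conjInv (toLaurent (X i)) = 1 := by
  have hX : toLaurent (X i : MvPolynomial σ ℂ) = AddMonoidAlgebra.single (Finsupp.single i 1) 1 := by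
    simp only [toLaurent, AddMonoidAlgebra.mapDomainAlgHom_apply, X, monomial]
    simp [natToInt]
  rw [hX, conjInv_single, AddMonoidAlgebra.single_mul_single, add_neg_cancel, map_one, mul_one]
  rfl

lemma coeff_zero_mul_conjInv (P Q : Laurent σ) :
    (P * conjInv Q).coeff 0 = P.coeff.sum fun a c => c * conj (Q.coeff a) := by
  simp [AddMonoidAlgebra.coeff_mul_apply_left, coeff_conjInv]

end Laurent

section Pairing

variable {n : ℕ}

lemma pairW_eq_sum_support (f g : MvPolynomial (Fin n) ℂ) :
    pairW n f g = ∑ K ∈ f.support, coeff K f * conj (coeff K g) :=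
  finsum_eq_finsetSum_of_support_subset _ fun _ hK =>
    mem_support_iff.mpr (left_ne_zero_of_mul (Function.mem_support.mp hK))

/-- The algebraic form of `(f, g) = (2π)^{-n} ∫ f(e^{iθ}) conj (g(e^{iθ})) dθ`. -/
theorem pairW_eq_coeff_zero (f g : MvPolynomial (Fin n) ℂ) :
    pairW n f g = (toLaurent f * conjInv (toLaurent g)).coeff 0 := by
  rw [coeff_zero_mul_conjInv, pairW_eq_sum_support]
  simp only [toLaurent, AddMonoidAlgebra.mapDomainAlgHom_apply, AddMonoidAlgebra.coeff_mapDomain]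
  rw [Finsupp.sum_mapDomain_index_inj natToInt_injective]
  simp only [Finsupp.mapDomain_apply natToInt_injective]
  rfl

theorem sum_sum_mul_pairW_mul_conj {ι : Type*} [Fintype ι] (y : ι → ℂ)
    (f g : ι → MvPolynomial (Fin n) ℂ) :
    ∑ j, ∑ k, y j * pairW n (f j) (g k) * conj (y k) =
      pairW n (∑ j, y j • f j) (∑ k, y k • g k) := by
  simp only [pairW_eq_coeff_zero, map_sum, map_smul, conjInv_smul, Finset.sum_mul_sum,
    smul_mul_smul_comm, AddMonoidAlgebra.coeff_sum, Finsupp.finsetSum_apply,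
    AddMonoidAlgebra.coeff_smul_apply, smul_eq_mul]
  exact Finset.sum_congr rfl fun _ _ => Finset.sum_congr rfl fun _ _ => mul_right_comm _ _ _

theorem pairW_self_pos {g : MvPolynomial (Fin n) ℂ} (hg : g ≠ 0) : 0 < pairW n g g := by
  rw [pairW_eq_sum_support]
  refine Finset.sum_pos (fun K hK => ?_) (support_nonempty.mpr hg)
  rw [Complex.mul_conj, Complex.zero_lt_real, Complex.normSq_pos]
  exact mem_support_iff.mp hK

end Pairing

section Phi

variable {σ : Type*} (S : Finset (σ × σ)) (tp tm : σ × σ → ℕ)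

def phi : MvPolynomial σ ℂ :=
  ∏ p ∈ S, (X p.1 - X p.2) ^ (2 * tp p) * (X p.1 + X p.2) ^ (2 * tm p)

def psi : MvPolynomial σ ℂ := ∏ p ∈ S, (X p.1 * X p.2) ^ (tp p + tm p)

def sqrtPhi : MvPolynomial σ ℂ := ∏ p ∈ S, (X p.1 - X p.2) ^ tp p * (X p.1 + X p.2) ^ tm p

theorem toLaurent_phi_mul_conjInv_psi :
    toLaurent (phi S tp tm) * conjInv (toLaurent (psi S tp tm)) =
      (-1) ^ (∑ p ∈ S, tp p) *
        (toLaurent (sqrtPhi S tp tm) * conjInv (toLaurent (sqrtPhi S tp tm))) := by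
  simp only [phi, psi, sqrtPhi, map_prod, map_mul, map_pow, map_sub, map_add]
  rw [← Finset.prod_mul_distrib, ← Finset.prod_mul_distrib, ← Finset.prod_pow_eq_pow_sum,
    ← Finset.prod_mul_distrib]
  exact Finset.prod_congr rfl fun p _ =>
    sub_pow_mul_add_pow_mul_pow (toLaurent_X_mul_conjInv p.1) (toLaurent_X_mul_conjInv p.2) _ _

theorem sqrtPhi_ne_zero (hS : ∀ p ∈ S, p.1 ≠ p.2) : sqrtPhi S tp tm ≠ 0 :=
  Finset.prod_ne_zero_iff.mpr fun p hp =>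
    mul_ne_zero (pow_ne_zero _ (sub_ne_zero.mpr (X_injective.ne (hS p hp))))
      (pow_ne_zero _ (X_add_X_ne_zero (hS p hp)))

end Phi

theorem neg_one_pow_mul_pairW_phi_mul_psi_mul {n : ℕ} (S : Finset (Fin n × Fin n))
    (tp tm : Fin n × Fin n → ℕ) (F : MvPolynomial (Fin n) ℂ) :
    (-1) ^ (∑ p ∈ S, tp p) * pairW n (phi S tp tm * F) (psi S tp tm * F) =
      pairW n (sqrtPhi S tp tm * F) (sqrtPhi S tp tm * F) := by
  simp only [pairW_eq_coeff_zero, map_mul]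
  rw [mul_mul_mul_comm, toLaurent_phi_mul_conjInv_psi, ← map_one (algebraMap ℂ (Laurent (Fin n))),
    ← map_neg, ← map_pow, mul_assoc, ← Algebra.smul_def, AddMonoidAlgebra.coeff_smul_apply,
    smul_eq_mul, ← mul_assoc, ← mul_pow, neg_one_mul, neg_neg, one_pow, one_mul, mul_mul_mul_comm]

end TorusPairing

end

/-- Claim 6.5: with `φ, ψ` built from `t⁺, t⁻` over pairs `j < j'` in `J`, and distinct
monomials `x^{K_1},…,x^{K_l}`, the matrix `A` with `a_{jk} = (φ·x^{K_j}, ψ·x^{K_k})`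
satisfies `(−1)^T · y A y* > 0` for all nonzero `y`; in particular `A` is nonsingular. -/
theorem stmt19 (n l : ℕ) (J : Finset (Fin n)) (tp tm : Fin n × Fin n → ℕ)
    (Ks : Fin l → (Fin n →₀ ℕ)) (hKs : Function.Injective Ks)
    (A : Matrix (Fin l) (Fin l) ℂ)
    (hA : ∀ j k, A j k =
      pairW n
        ((∏ p ∈ Finset.univ.filter
            (fun p : Fin n × Fin n => p.1 ∈ J ∧ p.2 ∈ J ∧ p.1 < p.2),
            (MvPolynomial.X p.1 - MvPolynomial.X p.2) ^ (2 * tp p) *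
              (MvPolynomial.X p.1 + MvPolynomial.X p.2) ^ (2 * tm p)) *
          MvPolynomial.monomial (Ks j) 1)
        ((∏ p ∈ Finset.univ.filter
            (fun p : Fin n × Fin n => p.1 ∈ J ∧ p.2 ∈ J ∧ p.1 < p.2),
            (MvPolynomial.X p.1 * MvPolynomial.X p.2) ^ (tp p + tm p)) *
          MvPolynomial.monomial (Ks k) 1)) :
    (∀ y : Fin l → ℂ, y ≠ 0 →
      0 < ((-1 : ℂ) ^ (∑ p ∈ Finset.univ.filter
              (fun p : Fin n × Fin n => p.1 ∈ J ∧ p.2 ∈ J ∧ p.1 < p.2), tp p) *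
            ∑ j, ∑ k, y j * A j k * conj (y k)).re ∧
        ((-1 : ℂ) ^ (∑ p ∈ Finset.univ.filter
              (fun p : Fin n × Fin n => p.1 ∈ J ∧ p.2 ∈ J ∧ p.1 < p.2), tp p) *
            ∑ j, ∑ k, y j * A j k * conj (y k)).im = 0) ∧
    A.det ≠ 0 := by
  open TorusPairing ComplexOrder in
  set S := Finset.univ.filter (fun p : Fin n × Fin n => p.1 ∈ J ∧ p.2 ∈ J ∧ p.1 < p.2)
  have hS : ∀ p ∈ S, p.1 ≠ p.2 := fun p hp => (Finset.mem_filter.mp hp).2.2.2.ne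
  have hpos : ∀ y : Fin l → ℂ, y ≠ 0 →
      0 < (-1 : ℂ) ^ (∑ p ∈ S, tp p) * ∑ j, ∑ k, y j * A j k * conj (y k) := by
    intro y hy
    set F : MvPolynomial (Fin n) ℂ := ∑ j, y j • monomial (Ks j) 1
    have hquad : ∑ j, ∑ k, y j * A j k * conj (y k) =
        pairW n (phi S tp tm * F) (psi S tp tm * F) := by
      simp only [hA, F, Finset.mul_sum, mul_smul_comm]
      exact sum_sum_mul_pairW_mul_conj y _ _
    rw [hquad, neg_one_pow_mul_pairW_phi_mul_psi_mul]
    exact pairW_self_pos (mul_ne_zero (sqrtPhi_ne_zero S tp tm hS) (sum_smul_monomial_ne_zero hKs hy))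
  refine ⟨fun y hy => ?_, A.det_ne_zero_of_sum_mul_conj_ne_zero fun y hy h0 => ?_⟩
  · obtain ⟨hre, him⟩ := Complex.pos_iff.mp (hpos y hy)
    exact ⟨hre, him.symm⟩
  · simpa [h0] using hpos y hy
end
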